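/- Let σ : VF ⇒ GU and σ' : VF' ⇒ G'U' be strict cells in Dbl with common vertical arrow V : 𝔹 → 𝔻 (so F : 𝔸 → 𝔹, F' : 𝔸' → 𝔹 strict, G : ℂ → 𝔻, G' : ℂ' → 𝔻 strict). Then there exist a unique colax functor U ×_V U' : 𝔸 ×_𝔹 𝔸' → ℂ ×_𝔻 ℂ' and strict cells π₁, π₂ over the pullback projections (given set-theoretically by (A, A') ↦ (UA, U'A') on all data), and the resulting square is a pullback in the category Dbl₁ whose objects are colax double functors and whose morphisms are arbitrary double cells of Dbl. -/

import Mathlib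

/-!
Core definitions: weak double categories (pseudocategories in `Cat`), lax and
colax double functors, strict functors, horizontal transformations, and the
double cells of the strict double category `Dbl` of Grandis–Paré.
-/

universe u u₀ v₀ v₁ v₂

/-- The underlying data (carriers) of a double category: objects, horizontal
arrows, vertical arrows and double cells. -/
structure DblData : Type (u + 1) where
  Obj : Type u
  Hor : Obj → Obj → Type u
  Ver : Obj → Obj → Type u
  Cell : ∀ {A B A' B' : Obj}, Hor A B → Ver A A' → Ver B B' → Hor A' B' → Type u

/-- A weak double category: a pseudocategory in `Cat`.  The horizontal
(transversal) direction is a strict category; vertical composition is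
associative and unitary up to coherent special isomorphisms `vassoc`, `lunit`,
`runit` (satisfying naturality, the pentagon and the triangle). -/
structure WeakDoubleCat extends DblData.{u} : Type (u + 1) where
  hid : ∀ A, Hor A A
  hcomp : ∀ {A B C}, Hor A B → Hor B C → Hor A C
  hid_comp : ∀ {A B} (f : Hor A B), hcomp (hid A) f = f
  hcomp_id : ∀ {A B} (f : Hor A B), hcomp f (hid B) = f
  hassoc : ∀ {A B C D} (f : Hor A B) (g : Hor B C) (h : Hor C D),
    hcomp (hcomp f g) h = hcomp f (hcomp g h)
  /-- identity double cell on a vertical arrow (for horizontal composition) -/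
  cid : ∀ {A A'} (u : Ver A A'), Cell (hid A) u u (hid A')
  /-- horizontal (strict) composition of double cells -/
  chcomp : ∀ {A B C A' B' C'} {f : Hor A B} {g : Hor B C}
    {u : Ver A A'} {v : Ver B B'} {w : Ver C C'} {f' : Hor A' B'} {g' : Hor B' C'},
    Cell f u v f' → Cell g v w g' → Cell (hcomp f g) u w (hcomp f' g')
  cid_chcomp : ∀ {A B A' B'} {f : Hor A B} {u : Ver A A'} {v : Ver B B'} {f' : Hor A' B'}
    (α : Cell f u v f'), HEq (chcomp (cid u) α) α
  chcomp_cid : ∀ {A B A' B'} {f : Hor A B} {u : Ver A A'} {v : Ver B B'} {f' : Hor A' B'}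
    (α : Cell f u v f'), HEq (chcomp α (cid v)) α
  chcomp_assoc : ∀ {A B C D A' B' C' D'} {f : Hor A B} {g : Hor B C} {h : Hor C D}
    {u : Ver A A'} {v : Ver B B'} {w : Ver C C'} {x : Ver D D'}
    {f' : Hor A' B'} {g' : Hor B' C'} {h' : Hor C' D'}
    (α : Cell f u v f') (β : Cell g v w g') (γ : Cell h w x h'),
    HEq (chcomp (chcomp α β) γ) (chcomp α (chcomp β γ))
  vid : ∀ A, Ver A A
  vcomp : ∀ {A B C}, Ver A B → Ver B C → Ver A C
  /-- identity double cell on a horizontal arrow (for vertical composition) -/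
  idcell : ∀ {A B} (f : Hor A B), Cell f (vid A) (vid B) f
  /-- vertical composition of double cells -/
  cvcomp : ∀ {A B A' B' A'' B''} {f : Hor A B} {u : Ver A A'} {v : Ver B B'} {g : Hor A' B'}
    {u' : Ver A' A''} {v' : Ver B' B''} {h : Hor A'' B''},
    Cell f u v g → Cell g u' v' h → Cell f (vcomp u u') (vcomp v v') h
  idcell_hid : ∀ A, idcell (hid A) = cid (vid A)
  idcell_hcomp : ∀ {A B C} (f : Hor A B) (g : Hor B C),
    idcell (hcomp f g) = chcomp (idcell f) (idcell g)
  cid_vcomp : ∀ {A B C} (u : Ver A B) (u' : Ver B C),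
    cvcomp (cid u) (cid u') = cid (vcomp u u')
  interchange : ∀ {A B C A' B' C' A'' B'' C''}
    {t₁ : Hor A B} {t₂ : Hor B C} {u₀ : Ver A A'} {u₁ : Ver B B'} {u₂ : Ver C C'}
    {m₁ : Hor A' B'} {m₂ : Hor B' C'} {w₀ : Ver A' A''} {w₁ : Ver B' B''} {w₂ : Ver C' C''}
    {b₁ : Hor A'' B''} {b₂ : Hor B'' C''}
    (α : Cell t₁ u₀ u₁ m₁) (β : Cell t₂ u₁ u₂ m₂)
    (γ : Cell m₁ w₀ w₁ b₁) (δ : Cell m₂ w₁ w₂ b₂),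
    chcomp (cvcomp α γ) (cvcomp β δ) = cvcomp (chcomp α β) (chcomp γ δ)
  /-- associativity special isomorphism for vertical composition -/
  vassoc : ∀ {A B C D} (u : Ver A B) (v : Ver B C) (w : Ver C D),
    Cell (hid A) (vcomp u (vcomp v w)) (vcomp (vcomp u v) w) (hid D)
  vassocInv : ∀ {A B C D} (u : Ver A B) (v : Ver B C) (w : Ver C D),
    Cell (hid A) (vcomp (vcomp u v) w) (vcomp u (vcomp v w)) (hid D)
  vassoc_vassocInv : ∀ {A B C D} (u : Ver A B) (v : Ver B C) (w : Ver C D),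
    HEq (chcomp (vassoc u v w) (vassocInv u v w)) (cid (vcomp u (vcomp v w)))
  vassocInv_vassoc : ∀ {A B C D} (u : Ver A B) (v : Ver B C) (w : Ver C D),
    HEq (chcomp (vassocInv u v w) (vassoc u v w)) (cid (vcomp (vcomp u v) w))
  /-- left unit special isomorphism -/
  lunit : ∀ {A B} (u : Ver A B), Cell (hid A) (vcomp (vid A) u) u (hid B)
  lunitInv : ∀ {A B} (u : Ver A B), Cell (hid A) u (vcomp (vid A) u) (hid B)
  lunit_lunitInv : ∀ {A B} (u : Ver A B),
    HEq (chcomp (lunit u) (lunitInv u)) (cid (vcomp (vid A) u))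
  lunitInv_lunit : ∀ {A B} (u : Ver A B), HEq (chcomp (lunitInv u) (lunit u)) (cid u)
  /-- right unit special isomorphism -/
  runit : ∀ {A B} (u : Ver A B), Cell (hid A) (vcomp u (vid B)) u (hid B)
  runitInv : ∀ {A B} (u : Ver A B), Cell (hid A) u (vcomp u (vid B)) (hid B)
  runit_runitInv : ∀ {A B} (u : Ver A B),
    HEq (chcomp (runit u) (runitInv u)) (cid (vcomp u (vid B)))
  runitInv_runit : ∀ {A B} (u : Ver A B), HEq (chcomp (runitInv u) (runit u)) (cid u)
  vassoc_nat : ∀ {A₀ B₀ A₁ B₁ A₂ B₂ A₃ B₃}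
    {g₀ : Hor A₀ B₀} {g₁ : Hor A₁ B₁} {g₂ : Hor A₂ B₂} {g₃ : Hor A₃ B₃}
    {a₁ : Ver A₀ A₁} {a₂ : Ver A₁ A₂} {a₃ : Ver A₂ A₃}
    {b₁ : Ver B₀ B₁} {b₂ : Ver B₁ B₂} {b₃ : Ver B₂ B₃}
    (α : Cell g₀ a₁ b₁ g₁) (β : Cell g₁ a₂ b₂ g₂) (γ : Cell g₂ a₃ b₃ g₃),
    HEq (chcomp (vassoc a₁ a₂ a₃) (cvcomp (cvcomp α β) γ))
        (chcomp (cvcomp α (cvcomp β γ)) (vassoc b₁ b₂ b₃))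
  lunit_nat : ∀ {A B A' B'} {f : Hor A B} {u : Ver A A'} {v : Ver B B'} {g : Hor A' B'}
    (α : Cell f u v g),
    HEq (chcomp (lunit u) α) (chcomp (cvcomp (idcell f) α) (lunit v))
  runit_nat : ∀ {A B A' B'} {f : Hor A B} {u : Ver A A'} {v : Ver B B'} {g : Hor A' B'}
    (α : Cell f u v g),
    HEq (chcomp (runit u) α) (chcomp (cvcomp α (idcell g)) (runit v))
  pentagon : ∀ {A B C D E} (u : Ver A B) (v : Ver B C) (w : Ver C D) (x : Ver D E),
    HEq (chcomp (vassoc u v (vcomp w x)) (vassoc (vcomp u v) w x))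
        (chcomp (cvcomp (cid u) (vassoc v w x))
          (chcomp (vassoc u (vcomp v w) x) (cvcomp (vassoc u v w) (cid x))))
  triangle : ∀ {A B C} (u : Ver A B) (v : Ver B C),
    HEq (chcomp (vassoc u (vid B) v) (cvcomp (runit u) (cid v)))
        (cvcomp (cid u) (lunit v))

/-- A lax (double) functor between weak double categories: strictly functorial
in the horizontal direction, with comparison special cells `laxid` and
`laxcomp` for the vertical identities and compositions, natural and satisfying
the unit and associativity coherence conditions. -/
structure LaxDblFunctor (X Y : WeakDoubleCat.{u}) : Type u where
  obj : X.Obj → Y.Obj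
  hmap : ∀ {A B}, X.Hor A B → Y.Hor (obj A) (obj B)
  vmap : ∀ {A B}, X.Ver A B → Y.Ver (obj A) (obj B)
  cmap : ∀ {A B A' B'} {f : X.Hor A B} {u : X.Ver A A'} {v : X.Ver B B'} {g : X.Hor A' B'},
    X.Cell f u v g → Y.Cell (hmap f) (vmap u) (vmap v) (hmap g)
  hmap_id : ∀ A, hmap (X.hid A) = Y.hid (obj A)
  hmap_comp : ∀ {A B C} (f : X.Hor A B) (g : X.Hor B C),
    hmap (X.hcomp f g) = Y.hcomp (hmap f) (hmap g)
  cmap_cid : ∀ {A A'} (u : X.Ver A A'), HEq (cmap (X.cid u)) (Y.cid (vmap u))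
  cmap_chcomp : ∀ {A B C A' B' C'} {f : X.Hor A B} {g : X.Hor B C}
    {u : X.Ver A A'} {v : X.Ver B B'} {w : X.Ver C C'} {f' : X.Hor A' B'} {g' : X.Hor B' C'}
    (α : X.Cell f u v f') (β : X.Cell g v w g'),
    HEq (cmap (X.chcomp α β)) (Y.chcomp (cmap α) (cmap β))
  laxid : ∀ A, Y.Cell (Y.hid (obj A)) (Y.vid (obj A)) (vmap (X.vid A)) (Y.hid (obj A))
  laxcomp : ∀ {A B C} (u : X.Ver A B) (v : X.Ver B C),
    Y.Cell (Y.hid (obj A)) (Y.vcomp (vmap u) (vmap v)) (vmap (X.vcomp u v)) (Y.hid (obj C))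
  laxid_nat : ∀ {A B} (f : X.Hor A B),
    HEq (Y.chcomp (laxid A) (cmap (X.idcell f))) (Y.chcomp (Y.idcell (hmap f)) (laxid B))
  laxcomp_nat : ∀ {A B A' B' A'' B''} {f : X.Hor A B} {u : X.Ver A A'} {v : X.Ver B B'}
    {g : X.Hor A' B'} {u' : X.Ver A' A''} {v' : X.Ver B' B''} {h : X.Hor A'' B''}
    (α : X.Cell f u v g) (β : X.Cell g u' v' h),
    HEq (Y.chcomp (laxcomp u u') (cmap (X.cvcomp α β)))
        (Y.chcomp (Y.cvcomp (cmap α) (cmap β)) (laxcomp v v'))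
  lax_lunit : ∀ {A B} (u : X.Ver A B),
    HEq (Y.chcomp (Y.cvcomp (laxid A) (Y.cid (vmap u)))
          (Y.chcomp (laxcomp (X.vid A) u) (cmap (X.lunit u))))
        (Y.lunit (vmap u))
  lax_runit : ∀ {A B} (u : X.Ver A B),
    HEq (Y.chcomp (Y.cvcomp (Y.cid (vmap u)) (laxid B))
          (Y.chcomp (laxcomp u (X.vid B)) (cmap (X.runit u))))
        (Y.runit (vmap u))
  lax_assoc : ∀ {A B C D} (u : X.Ver A B) (v : X.Ver B C) (w : X.Ver C D),
    HEq (Y.chcomp (Y.vassoc (vmap u) (vmap v) (vmap w))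
          (Y.chcomp (Y.cvcomp (laxcomp u v) (Y.cid (vmap w))) (laxcomp (X.vcomp u v) w)))
        (Y.chcomp (Y.cvcomp (Y.cid (vmap u)) (laxcomp v w))
          (Y.chcomp (laxcomp u (X.vcomp v w)) (cmap (X.vassoc u v w))))

/-- A lax double functor is strict when its comparison cells are identities. -/
def LaxDblFunctor.IsStrict {X Y : WeakDoubleCat.{u}} (F : LaxDblFunctor X Y) : Prop :=
  (∀ A, F.vmap (X.vid A) = Y.vid (F.obj A)) ∧
  (∀ {A B C} (u : X.Ver A B) (v : X.Ver B C),
    F.vmap (X.vcomp u v) = Y.vcomp (F.vmap u) (F.vmap v)) ∧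
  (∀ A, HEq (F.laxid A) (Y.cid (Y.vid (F.obj A)))) ∧
  (∀ {A B C} (u : X.Ver A B) (v : X.Ver B C),
    HEq (F.laxcomp u v) (Y.cid (Y.vcomp (F.vmap u) (F.vmap v))))

/-- A colax (double) functor: as a lax one but with the comparison special
cells in the opposite direction. -/
structure ColaxDblFunctor (X Y : WeakDoubleCat.{u}) : Type u where
  obj : X.Obj → Y.Obj
  hmap : ∀ {A B}, X.Hor A B → Y.Hor (obj A) (obj B)
  vmap : ∀ {A B}, X.Ver A B → Y.Ver (obj A) (obj B)
  cmap : ∀ {A B A' B'} {f : X.Hor A B} {u : X.Ver A A'} {v : X.Ver B B'} {g : X.Hor A' B'},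
    X.Cell f u v g → Y.Cell (hmap f) (vmap u) (vmap v) (hmap g)
  hmap_id : ∀ A, hmap (X.hid A) = Y.hid (obj A)
  hmap_comp : ∀ {A B C} (f : X.Hor A B) (g : X.Hor B C),
    hmap (X.hcomp f g) = Y.hcomp (hmap f) (hmap g)
  cmap_cid : ∀ {A A'} (u : X.Ver A A'), HEq (cmap (X.cid u)) (Y.cid (vmap u))
  cmap_chcomp : ∀ {A B C A' B' C'} {f : X.Hor A B} {g : X.Hor B C}
    {u : X.Ver A A'} {v : X.Ver B B'} {w : X.Ver C C'} {f' : X.Hor A' B'} {g' : X.Hor B' C'}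
    (α : X.Cell f u v f') (β : X.Cell g v w g'),
    HEq (cmap (X.chcomp α β)) (Y.chcomp (cmap α) (cmap β))
  colaxid : ∀ A, Y.Cell (Y.hid (obj A)) (vmap (X.vid A)) (Y.vid (obj A)) (Y.hid (obj A))
  colaxcomp : ∀ {A B C} (u : X.Ver A B) (v : X.Ver B C),
    Y.Cell (Y.hid (obj A)) (vmap (X.vcomp u v)) (Y.vcomp (vmap u) (vmap v)) (Y.hid (obj C))
  colaxid_nat : ∀ {A B} (f : X.Hor A B),
    HEq (Y.chcomp (cmap (X.idcell f)) (colaxid B)) (Y.chcomp (colaxid A) (Y.idcell (hmap f)))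
  colaxcomp_nat : ∀ {A B A' B' A'' B''} {f : X.Hor A B} {u : X.Ver A A'} {v : X.Ver B B'}
    {g : X.Hor A' B'} {u' : X.Ver A' A''} {v' : X.Ver B' B''} {h : X.Hor A'' B''}
    (α : X.Cell f u v g) (β : X.Cell g u' v' h),
    HEq (Y.chcomp (cmap (X.cvcomp α β)) (colaxcomp v v'))
        (Y.chcomp (colaxcomp u u') (Y.cvcomp (cmap α) (cmap β)))
  colax_lunit : ∀ {A B} (u : X.Ver A B),
    HEq (Y.chcomp (colaxcomp (X.vid A) u)
          (Y.chcomp (Y.cvcomp (colaxid A) (Y.cid (vmap u))) (Y.lunit (vmap u))))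
        (cmap (X.lunit u))
  colax_runit : ∀ {A B} (u : X.Ver A B),
    HEq (Y.chcomp (colaxcomp u (X.vid B))
          (Y.chcomp (Y.cvcomp (Y.cid (vmap u)) (colaxid B)) (Y.runit (vmap u))))
        (cmap (X.runit u))
  colax_assoc : ∀ {A B C D} (u : X.Ver A B) (v : X.Ver B C) (w : X.Ver C D),
    HEq (Y.chcomp (cmap (X.vassoc u v w))
          (Y.chcomp (colaxcomp (X.vcomp u v) w) (Y.cvcomp (colaxcomp u v) (Y.cid (vmap w)))))
        (Y.chcomp (colaxcomp u (X.vcomp v w))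
          (Y.chcomp (Y.cvcomp (Y.cid (vmap u)) (colaxcomp v w))
            (Y.vassoc (vmap u) (vmap v) (vmap w))))

/-- A colax double functor is strict when its comparison cells are identities. -/
def ColaxDblFunctor.IsStrict {X Y : WeakDoubleCat.{u}} (F : ColaxDblFunctor X Y) : Prop :=
  (∀ A, F.vmap (X.vid A) = Y.vid (F.obj A)) ∧
  (∀ {A B C} (u : X.Ver A B) (v : X.Ver B C),
    F.vmap (X.vcomp u v) = Y.vcomp (F.vmap u) (F.vmap v)) ∧
  (∀ A, HEq (F.colaxid A) (Y.cid (Y.vid (F.obj A)))) ∧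
  (∀ {A B C} (u : X.Ver A B) (v : X.Ver B C),
    HEq (F.colaxcomp u v) (Y.cid (Y.vcomp (F.vmap u) (F.vmap v))))

/-- Horizontal transformation between lax double functors: the 2-cells of the
2-category `LxDbl`. -/
structure HorizTransf {X Y : WeakDoubleCat.{u}} (F G : LaxDblFunctor X Y) : Type u where
  app : ∀ A, Y.Hor (F.obj A) (G.obj A)
  cellapp : ∀ {A B} (u : X.Ver A B), Y.Cell (app A) (F.vmap u) (G.vmap u) (app B)
  hnat : ∀ {A B} (f : X.Hor A B), Y.hcomp (F.hmap f) (app B) = Y.hcomp (app A) (G.hmap f)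
  cellnat : ∀ {A B A' B'} {f : X.Hor A B} {u : X.Ver A A'} {v : X.Ver B B'} {g : X.Hor A' B'}
    (α : X.Cell f u v g),
    HEq (Y.chcomp (F.cmap α) (cellapp v)) (Y.chcomp (cellapp u) (G.cmap α))
  unit_compat : ∀ A,
    HEq (Y.chcomp (F.laxid A) (cellapp (X.vid A)))
        (Y.chcomp (Y.idcell (app A)) (G.laxid A))
  comp_compat : ∀ {A B C} (u : X.Ver A B) (v : X.Ver B C),
    HEq (Y.chcomp (F.laxcomp u v) (cellapp (X.vcomp u v)))
        (Y.chcomp (Y.cvcomp (cellapp u) (cellapp v)) (G.laxcomp u v))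

/-- Horizontal transformation between colax double functors: the 2-cells of
the 2-category `CxDbl`. -/
structure CHorizTransf {X Y : WeakDoubleCat.{u}} (F G : ColaxDblFunctor X Y) : Type u where
  app : ∀ A, Y.Hor (F.obj A) (G.obj A)
  cellapp : ∀ {A B} (u : X.Ver A B), Y.Cell (app A) (F.vmap u) (G.vmap u) (app B)
  hnat : ∀ {A B} (f : X.Hor A B), Y.hcomp (F.hmap f) (app B) = Y.hcomp (app A) (G.hmap f)
  cellnat : ∀ {A B A' B'} {f : X.Hor A B} {u : X.Ver A A'} {v : X.Ver B B'} {g : X.Hor A' B'}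
    (α : X.Cell f u v g),
    HEq (Y.chcomp (F.cmap α) (cellapp v)) (Y.chcomp (cellapp u) (G.cmap α))
  unit_compat : ∀ A,
    HEq (Y.chcomp (F.colaxid A) (Y.idcell (app A)))
        (Y.chcomp (cellapp (X.vid A)) (G.colaxid A))
  comp_compat : ∀ {A B C} (u : X.Ver A B) (v : X.Ver B C),
    HEq (Y.chcomp (F.colaxcomp u v) (Y.cvcomp (cellapp u) (cellapp v)))
        (Y.chcomp (cellapp (X.vcomp u v)) (G.colaxcomp u v))

/-- A double cell of the strict double category `Dbl`:  `F, G` are lax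
functors (horizontal arrows), `U, V` colax functors (vertical arrows), and
the cell is a transformation `V F ⇒ G U` compatible with all the structure. -/
structure DblCellGP {XA XB XC XD : WeakDoubleCat.{u}}
    (F : LaxDblFunctor XA XB) (G : LaxDblFunctor XC XD)
    (U : ColaxDblFunctor XA XC) (V : ColaxDblFunctor XB XD) : Type u where
  app : ∀ A, XD.Hor (V.obj (F.obj A)) (G.obj (U.obj A))
  cellapp : ∀ {A B} (u : XA.Ver A B),
    XD.Cell (app A) (V.vmap (F.vmap u)) (G.vmap (U.vmap u)) (app B)
  hnat : ∀ {A B} (f : XA.Hor A B),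
    XD.hcomp (V.hmap (F.hmap f)) (app B) = XD.hcomp (app A) (G.hmap (U.hmap f))
  cellnat : ∀ {A B A' B'} {f : XA.Hor A B} {u : XA.Ver A A'} {v : XA.Ver B B'}
    {g : XA.Hor A' B'} (α : XA.Cell f u v g),
    HEq (XD.chcomp (V.cmap (F.cmap α)) (cellapp v))
        (XD.chcomp (cellapp u) (G.cmap (U.cmap α)))
  unit_compat : ∀ A,
    HEq (XD.chcomp (V.cmap (F.laxid A))
          (XD.chcomp (cellapp (XA.vid A)) (G.cmap (U.colaxid A))))
        (XD.chcomp (V.colaxid (F.obj A))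
          (XD.chcomp (XD.idcell (app A)) (G.laxid (U.obj A))))
  comp_compat : ∀ {A B C} (u : XA.Ver A B) (v : XA.Ver B C),
    HEq (XD.chcomp (V.cmap (F.laxcomp u v))
          (XD.chcomp (cellapp (XA.vcomp u v)) (G.cmap (U.colaxcomp u v))))
        (XD.chcomp (V.colaxcomp (F.vmap u) (F.vmap v))
          (XD.chcomp (XD.cvcomp (cellapp u) (cellapp v))
            (G.laxcomp (U.vmap u) (U.vmap v))))

/-- A cell of `Dbl` is (horizontally) strict if its horizontal boundaries are
strict functors and it is a horizontal identity on objects and vertical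
arrows, i.e. `V F = G U`. -/
def DblCellGP.IsStrict {XA XB XC XD : WeakDoubleCat.{u}}
    {F : LaxDblFunctor XA XB} {G : LaxDblFunctor XC XD}
    {U : ColaxDblFunctor XA XC} {V : ColaxDblFunctor XB XD}
    (π : DblCellGP F G U V) : Prop :=
  F.IsStrict ∧ G.IsStrict ∧
  (∀ A, V.obj (F.obj A) = G.obj (U.obj A)) ∧
  (∀ {A B} (f : XA.Hor A B), HEq (V.hmap (F.hmap f)) (G.hmap (U.hmap f))) ∧
  (∀ {A B} (u : XA.Ver A B), HEq (V.vmap (F.vmap u)) (G.vmap (U.vmap u))) ∧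
  (∀ {A B A' B'} {f : XA.Hor A B} {u : XA.Ver A A'} {v : XA.Ver B B'} {g : XA.Hor A' B'}
    (α : XA.Cell f u v g), HEq (V.cmap (F.cmap α)) (G.cmap (U.cmap α))) ∧
  (∀ A, HEq (π.app A) (XD.hid (V.obj (F.obj A)))) ∧
  (∀ {A B} (u : XA.Ver A B), HEq (π.cellapp u) (XD.cid (V.vmap (F.vmap u))))

/-- `H` is the composite `F' ∘ F` of the lax functors `F` and `F'`, expressed
componentwise. -/
def LaxCompSpec {X Y Z : WeakDoubleCat.{u}} (F : LaxDblFunctor X Y)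
    (F' : LaxDblFunctor Y Z) (H : LaxDblFunctor X Z) : Prop :=
  (∀ A, H.obj A = F'.obj (F.obj A)) ∧
  (∀ {A B} (f : X.Hor A B), HEq (H.hmap f) (F'.hmap (F.hmap f))) ∧
  (∀ {A B} (u : X.Ver A B), HEq (H.vmap u) (F'.vmap (F.vmap u))) ∧
  (∀ {A B A' B'} {f : X.Hor A B} {u : X.Ver A A'} {v : X.Ver B B'} {g : X.Hor A' B'}
    (α : X.Cell f u v g), HEq (H.cmap α) (F'.cmap (F.cmap α))) ∧
  (∀ A, HEq (H.laxid A) (Z.chcomp (F'.laxid (F.obj A)) (F'.cmap (F.laxid A)))) ∧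
  (∀ {A B C} (u : X.Ver A B) (v : X.Ver B C),
    HEq (H.laxcomp u v)
      (Z.chcomp (F'.laxcomp (F.vmap u) (F.vmap v)) (F'.cmap (F.laxcomp u v))))

/-- `H` is the composite `F' ∘ F` of the colax functors `F` and `F'`. -/
def ColaxCompSpec {X Y Z : WeakDoubleCat.{u}} (F : ColaxDblFunctor X Y)
    (F' : ColaxDblFunctor Y Z) (H : ColaxDblFunctor X Z) : Prop :=
  (∀ A, H.obj A = F'.obj (F.obj A)) ∧
  (∀ {A B} (f : X.Hor A B), HEq (H.hmap f) (F'.hmap (F.hmap f))) ∧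
  (∀ {A B} (u : X.Ver A B), HEq (H.vmap u) (F'.vmap (F.vmap u))) ∧
  (∀ {A B A' B'} {f : X.Hor A B} {u : X.Ver A A'} {v : X.Ver B B'} {g : X.Hor A' B'}
    (α : X.Cell f u v g), HEq (H.cmap α) (F'.cmap (F.cmap α))) ∧
  (∀ A, HEq (H.colaxid A) (Z.chcomp (F'.cmap (F.colaxid A)) (F'.colaxid (F.obj A)))) ∧
  (∀ {A B C} (u : X.Ver A B) (v : X.Ver B C),
    HEq (H.colaxcomp u v)
      (Z.chcomp (F'.cmap (F.colaxcomp u v)) (F'.colaxcomp (F.vmap u) (F.vmap v))))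

/-- `F` is the identity lax functor of `X`, expressed componentwise. -/
def LaxIdSpec {X : WeakDoubleCat.{u}} (F : LaxDblFunctor X X) : Prop :=
  (∀ A, F.obj A = A) ∧
  (∀ {A B} (f : X.Hor A B), HEq (F.hmap f) f) ∧
  (∀ {A B} (u : X.Ver A B), HEq (F.vmap u) u) ∧
  (∀ {A B A' B'} {f : X.Hor A B} {u : X.Ver A A'} {v : X.Ver B B'} {g : X.Hor A' B'}
    (α : X.Cell f u v g), HEq (F.cmap α) α) ∧
  (∀ A, HEq (F.laxid A) (X.cid (X.vid A))) ∧
  (∀ {A B C} (u : X.Ver A B) (v : X.Ver B C),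
    HEq (F.laxcomp u v) (X.cid (X.vcomp u v)))

/-- `F` is the identity colax functor of `X`, expressed componentwise. -/
def ColaxIdSpec {X : WeakDoubleCat.{u}} (F : ColaxDblFunctor X X) : Prop :=
  (∀ A, F.obj A = A) ∧
  (∀ {A B} (f : X.Hor A B), HEq (F.hmap f) f) ∧
  (∀ {A B} (u : X.Ver A B), HEq (F.vmap u) u) ∧
  (∀ {A B A' B'} {f : X.Hor A B} {u : X.Ver A A'} {v : X.Ver B B'} {g : X.Hor A' B'}
    (α : X.Cell f u v g), HEq (F.cmap α) α) ∧
  (∀ A, HEq (F.colaxid A) (X.cid (X.vid A))) ∧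
  (∀ {A B C} (u : X.Ver A B) (v : X.Ver B C),
    HEq (F.colaxcomp u v) (X.cid (X.vcomp u v)))

/-- `ρ` is the horizontal composite of the `Dbl`-cells `π` and `π'`
(composition along the common vertical boundary `V`), componentwise. -/
def HCompCellSpec {XA XB XC XD XB' XD' : WeakDoubleCat.{u}}
    {F : LaxDblFunctor XA XB} {G : LaxDblFunctor XC XD}
    {U : ColaxDblFunctor XA XC} {V : ColaxDblFunctor XB XD}
    {F' : LaxDblFunctor XB XB'} {G' : LaxDblFunctor XD XD'}
    {W : ColaxDblFunctor XB' XD'}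
    {F₂ : LaxDblFunctor XA XB'} {G₂ : LaxDblFunctor XC XD'}
    (π : DblCellGP F G U V) (π' : DblCellGP F' G' V W)
    (_ : LaxCompSpec F F' F₂) (_ : LaxCompSpec G G' G₂)
    (ρ : DblCellGP F₂ G₂ U W) : Prop :=
  (∀ A, HEq (ρ.app A) (XD'.hcomp (π'.app (F.obj A)) (G'.hmap (π.app A)))) ∧
  (∀ {A B} (u : XA.Ver A B),
    HEq (ρ.cellapp u) (XD'.chcomp (π'.cellapp (F.vmap u)) (G'.cmap (π.cellapp u))))

/-- `ρ` is the vertical composite of the `Dbl`-cells `π` and `σ`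
(composition along the common horizontal boundary `G`), componentwise. -/
def VCompCellSpec {XA XB XC XD XC' XD' : WeakDoubleCat.{u}}
    {F : LaxDblFunctor XA XB} {G : LaxDblFunctor XC XD}
    {U : ColaxDblFunctor XA XC} {V : ColaxDblFunctor XB XD}
    {H : LaxDblFunctor XC' XD'}
    {U' : ColaxDblFunctor XC XC'} {V' : ColaxDblFunctor XD XD'}
    {U₂ : ColaxDblFunctor XA XC'} {V₂ : ColaxDblFunctor XB XD'}
    (π : DblCellGP F G U V) (σ : DblCellGP G H U' V')
    (_ : ColaxCompSpec U U' U₂) (_ : ColaxCompSpec V V' V₂)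
    (ρ : DblCellGP F H U₂ V₂) : Prop :=
  (∀ A, HEq (ρ.app A) (XD'.hcomp (V'.hmap (π.app A)) (σ.app (U.obj A)))) ∧
  (∀ {A B} (u : XA.Ver A B),
    HEq (ρ.cellapp u) (XD'.chcomp (V'.cmap (π.cellapp u)) (σ.cellapp (U.vmap u))))


/-- The set-theoretical pullback of the carriers of two double functors. -/
def pbData {A B C : WeakDoubleCat.{u}} (F : LaxDblFunctor A C) (G : LaxDblFunctor B C) :
    DblData.{u} where
  Obj := {p : A.Obj × B.Obj // F.obj p.1 = G.obj p.2}
  Hor X Y := {p : A.Hor X.1.1 Y.1.1 × B.Hor X.1.2 Y.1.2 // HEq (F.hmap p.1) (G.hmap p.2)}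
  Ver X Y := {p : A.Ver X.1.1 Y.1.1 × B.Ver X.1.2 Y.1.2 // HEq (F.vmap p.1) (G.vmap p.2)}
  Cell f u v g :=
    {p : A.Cell f.1.1 u.1.1 v.1.1 g.1.1 × B.Cell f.1.2 u.1.2 v.1.2 g.1.2 //
      HEq (F.cmap p.1) (G.cmap p.2)}

/-- `P`, with the projections `p` and `q`, is the set-theoretical pullback
weak double category of the two functors `F` and `G` (cf. Proposition 2.1):
its carrier is the set-theoretic pullback and the projections are the strict
product projections. -/
def IsSetPullback {A B C : WeakDoubleCat.{u}} (F : LaxDblFunctor A C) (G : LaxDblFunctor B C)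
    (P : WeakDoubleCat.{u}) (hcar : P.toDblData = pbData F G)
    (p : LaxDblFunctor P A) (q : LaxDblFunctor P B) : Prop :=
  p.IsStrict ∧ q.IsStrict ∧
  (∀ x : P.Obj, p.obj x = (cast (congrArg DblData.Obj hcar) x).val.1) ∧
  (∀ x : P.Obj, q.obj x = (cast (congrArg DblData.Obj hcar) x).val.2) ∧
  HEq (@LaxDblFunctor.hmap P A p)
    (fun (X Y : (pbData F G).Obj) (f : (pbData F G).Hor X Y) => f.val.1) ∧
  HEq (@LaxDblFunctor.hmap P B q)
    (fun (X Y : (pbData F G).Obj) (f : (pbData F G).Hor X Y) => f.val.2) ∧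
  HEq (@LaxDblFunctor.vmap P A p)
    (fun (X Y : (pbData F G).Obj) (u : (pbData F G).Ver X Y) => u.val.1) ∧
  HEq (@LaxDblFunctor.vmap P B q)
    (fun (X Y : (pbData F G).Obj) (u : (pbData F G).Ver X Y) => u.val.2) ∧
  HEq (@LaxDblFunctor.cmap P A p)
    (fun (X Y X' Y' : (pbData F G).Obj) (f : (pbData F G).Hor X Y)
      (u : (pbData F G).Ver X X') (v : (pbData F G).Ver Y Y') (g : (pbData F G).Hor X' Y')
      (α : (pbData F G).Cell f u v g) => α.val.1) ∧
  HEq (@LaxDblFunctor.cmap P B q)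
    (fun (X Y X' Y' : (pbData F G).Obj) (f : (pbData F G).Hor X Y)
      (u : (pbData F G).Ver X X') (v : (pbData F G).Ver Y Y') (g : (pbData F G).Hor X' Y')
      (α : (pbData F G).Cell f u v g) => α.val.2)

/-!
Strict lax functors preserve all the structure of a weak double category, the comparison
isomorphisms included (inverses are unique), so the set-theoretical pullback of two strict
functors carries exactly one weak double category structure with strict projections: the
componentwise one. Everything can therefore be computed componentwise. Strictness of `σ` and
`σ'` makes `V F` and `G U` agree on the nose, comparison cells of `U` and `V` included, so
`U` and `U'` pair to a colax functor between the pullbacks; a cone of cells `ρ₁`, `ρ₂` with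
equal composites with `σ` and `σ'` pairs to a cell into the pullback square, and the
projections determine every component, which gives uniqueness.
-/

namespace WeakDoubleCat

variable (Y : WeakDoubleCat.{u})

theorem cid_chcomp' {A₀ B C A₀' B' C' : Y.Obj}
    {f₀ : Y.Hor A₀ B} {g : Y.Hor B C} {x : Y.Ver A₀ A₀'} {u : Y.Ver B B'}
    {w : Y.Ver C C'} {f₀' : Y.Hor A₀' B'} {g' : Y.Hor B' C'}
    {c : Y.Cell f₀ x u f₀'} (α : Y.Cell g u w g')
    (hA : A₀ = B) (hA' : A₀' = B') (hf₀ : HEq f₀ (Y.hid B)) (hx : HEq x u)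
    (hf₀' : HEq f₀' (Y.hid B')) (hc : HEq c (Y.cid u)) : HEq (Y.chcomp c α) α :=
  (show HEq (Y.chcomp c α) (Y.chcomp (Y.cid u) α) by congr!).trans (Y.cid_chcomp α)

theorem chcomp_cid' {A B C₀ A' B' C₀' : Y.Obj}
    {f : Y.Hor A B} {g : Y.Hor B C₀} {u : Y.Ver A A'} {v : Y.Ver B B'}
    {w : Y.Ver C₀ C₀'} {f' : Y.Hor A' B'} {g' : Y.Hor B' C₀'}
    (α : Y.Cell f u v f') {c : Y.Cell g v w g'}
    (hC : C₀ = B) (hC' : C₀' = B') (hg : HEq g (Y.hid B)) (hw : HEq w v)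
    (hg' : HEq g' (Y.hid B')) (hc : HEq c (Y.cid v)) : HEq (Y.chcomp α c) α :=
  (show HEq (Y.chcomp α c) (Y.chcomp α (Y.cid v)) by congr!).trans (Y.chcomp_cid α)

theorem left_inv_heq_right_inv {A B A₀ B₀ : Y.Obj} {x y : Y.Ver A B}
    {f₀ : Y.Hor A₀ A₀} {g₀ : Y.Hor B₀ B₀} {x₀ y₀ : Y.Ver A₀ B₀}
    {a₀ : Y.Cell f₀ x₀ y₀ g₀} {b : Y.Cell f₀ y₀ x₀ g₀}
    {a : Y.Cell (Y.hid A) x y (Y.hid B)} {b' : Y.Cell (Y.hid A) y x (Y.hid B)}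
    (hA : A₀ = A) (hB : B₀ = B) (hf₀ : HEq f₀ (Y.hid A)) (hg₀ : HEq g₀ (Y.hid B))
    (hx : HEq x₀ x) (hy : HEq y₀ y) (ha : HEq a₀ a)
    (hba : HEq (Y.chcomp b a₀) (Y.cid y₀)) (hab' : HEq (Y.chcomp a b') (Y.cid x)) :
    HEq b b' := by
  subst hA hB
  obtain rfl := eq_of_heq hf₀; obtain rfl := eq_of_heq hg₀
  obtain rfl := eq_of_heq hx; obtain rfl := eq_of_heq hy; obtain rfl := eq_of_heq ha
  have hb : HEq (Y.chcomp b (Y.cid x₀)) (Y.chcomp b (Y.chcomp a₀ b')) := by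
    have := (Y.hid_comp (Y.hid A₀)).symm; have := (Y.hid_comp (Y.hid B₀)).symm
    have := hab'.symm
    congr! 1
  have hb' : HEq (Y.chcomp (Y.chcomp b a₀) b') (Y.chcomp (Y.cid y₀) b') := by
    have := Y.hid_comp (Y.hid A₀); have := Y.hid_comp (Y.hid B₀)
    congr! 1
  exact (Y.chcomp_cid b).symm.trans <| hb.trans <|
    (Y.chcomp_assoc b a₀ b').symm.trans <| hb'.trans (Y.cid_chcomp b')

theorem lax_lunit_cid {A B : Y.Obj} (u : Y.Ver A B) :
    HEq (Y.chcomp (Y.cvcomp (Y.cid (Y.vid A)) (Y.cid u))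
      (Y.chcomp (Y.cid (Y.vcomp (Y.vid A) u)) (Y.lunit u))) (Y.lunit u) := by
  rw [Y.cid_vcomp]
  exact (Y.cid_chcomp _).trans (Y.cid_chcomp _)

theorem lax_runit_cid {A B : Y.Obj} (u : Y.Ver A B) :
    HEq (Y.chcomp (Y.cvcomp (Y.cid u) (Y.cid (Y.vid B)))
      (Y.chcomp (Y.cid (Y.vcomp u (Y.vid B))) (Y.runit u))) (Y.runit u) := by
  rw [Y.cid_vcomp]
  exact (Y.cid_chcomp _).trans (Y.cid_chcomp _)

theorem lax_assoc_cid {A B C D : Y.Obj} (u : Y.Ver A B) (v : Y.Ver B C) (w : Y.Ver C D) :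
    HEq (Y.chcomp (Y.vassoc u v w)
        (Y.chcomp (Y.cvcomp (Y.cid (Y.vcomp u v)) (Y.cid w)) (Y.cid (Y.vcomp (Y.vcomp u v) w))))
      (Y.chcomp (Y.cvcomp (Y.cid u) (Y.cid (Y.vcomp v w)))
        (Y.chcomp (Y.cid (Y.vcomp u (Y.vcomp v w))) (Y.vassoc u v w))) := by
  rw [Y.cid_vcomp, Y.cid_vcomp]
  have hinner : HEq (Y.chcomp (Y.vassoc u v w)
      (Y.chcomp (Y.cid (Y.vcomp (Y.vcomp u v) w)) (Y.cid (Y.vcomp (Y.vcomp u v) w))))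
      (Y.chcomp (Y.vassoc u v w) (Y.cid (Y.vcomp (Y.vcomp u v) w))) := by
    have := Y.cid_chcomp (Y.cid (Y.vcomp (Y.vcomp u v) w))
    have := Y.hid_comp (Y.hid A); have := Y.hid_comp (Y.hid D)
    congr! 1
  exact hinner.trans <| (Y.chcomp_cid _).trans ((Y.cid_chcomp _).trans (Y.cid_chcomp _)).symm

end WeakDoubleCat

theorem LaxDblFunctor.cmap_heq_of_left_inv {X Y : WeakDoubleCat.{u}} (F : LaxDblFunctor X Y)
    {A B : X.Obj} {x y : X.Ver A B}
    {a : X.Cell (X.hid A) x y (X.hid B)} {b : X.Cell (X.hid A) y x (X.hid B)}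
    {x' y' : Y.Ver (F.obj A) (F.obj B)}
    {a' : Y.Cell (Y.hid (F.obj A)) x' y' (Y.hid (F.obj B))}
    {b' : Y.Cell (Y.hid (F.obj A)) y' x' (Y.hid (F.obj B))}
    (hba : HEq (X.chcomp b a) (X.cid y)) (hx : HEq (F.vmap x) x') (hy : HEq (F.vmap y) y')
    (ha : HEq (F.cmap a) a') (hab' : HEq (Y.chcomp a' b') (Y.cid x')) :
    HEq (F.cmap b) b' := by
  refine Y.left_inv_heq_right_inv rfl rfl (heq_of_eq (F.hmap_id A)) (heq_of_eq (F.hmap_id B))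
    hx hy ha ?_ hab'
  have := X.hid_comp (X.hid A)
  have := X.hid_comp (X.hid B)
  exact (F.cmap_chcomp b a).symm.trans <|
    (show HEq _ (F.cmap (X.cid y)) by congr! 1).trans (F.cmap_cid y)

namespace LaxDblFunctor.IsStrict

variable {X Y : WeakDoubleCat.{u}} {F : LaxDblFunctor X Y} (hF : F.IsStrict)
include hF

theorem laxid_heq_cid (A : X.Obj) : HEq (F.laxid A) (Y.cid (F.vmap (X.vid A))) := by
  have := (hF.1 A).symm
  exact (hF.2.2.1 A).trans (by congr!)

theorem laxcomp_heq_cid {A B C : X.Obj} (u : X.Ver A B) (v : X.Ver B C) :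
    HEq (F.laxcomp u v) (Y.cid (F.vmap (X.vcomp u v))) := by
  have := (hF.2.1 u v).symm
  exact (hF.2.2.2 u v).trans (by congr!)

theorem cmap_idcell {A B : X.Obj} (f : X.Hor A B) :
    HEq (F.cmap (X.idcell f)) (Y.idcell (F.hmap f)) :=
  (Y.cid_chcomp' _ rfl rfl HEq.rfl (heq_of_eq (hF.1 A)).symm HEq.rfl
      (hF.laxid_heq_cid A)).symm.trans <|
    (F.laxid_nat f).trans
      (Y.chcomp_cid' _ rfl rfl HEq.rfl (heq_of_eq (hF.1 B)) HEq.rfl (hF.2.2.1 B))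

theorem cmap_cvcomp {A B A' B' A'' B'' : X.Obj} {f : X.Hor A B}
    {u : X.Ver A A'} {v : X.Ver B B'} {g : X.Hor A' B'}
    {u' : X.Ver A' A''} {v' : X.Ver B' B''} {h : X.Hor A'' B''}
    (α : X.Cell f u v g) (β : X.Cell g u' v' h) :
    HEq (F.cmap (X.cvcomp α β)) (Y.cvcomp (F.cmap α) (F.cmap β)) :=
  (Y.cid_chcomp' _ rfl rfl HEq.rfl (heq_of_eq (hF.2.1 u u')).symm HEq.rfl
      (hF.laxcomp_heq_cid u u')).symm.trans <|
    (F.laxcomp_nat α β).trans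
      (Y.chcomp_cid' _ rfl rfl HEq.rfl (heq_of_eq (hF.2.1 v v')) HEq.rfl (hF.2.2.2 v v'))

theorem cmap_lunit {A B : X.Obj} (u : X.Ver A B) :
    HEq (F.cmap (X.lunit u)) (Y.lunit (F.vmap u)) := by
  have := (hF.1 A).symm
  have := hF.laxid_heq_cid A
  have hunit : HEq (Y.cvcomp (F.laxid A) (Y.cid (F.vmap u)))
      (Y.cid (Y.vcomp (F.vmap (X.vid A)) (F.vmap u))) := by
    rw [← Y.cid_vcomp]
    congr! 1
  refine HEq.trans ?_ (F.lax_lunit u)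
  exact ((Y.cid_chcomp' _ rfl rfl HEq.rfl (by congr!) HEq.rfl hunit).trans
    (Y.cid_chcomp' _ rfl rfl HEq.rfl (heq_of_eq (hF.2.1 _ u)).symm HEq.rfl
      (hF.laxcomp_heq_cid _ _))).symm

theorem cmap_runit {A B : X.Obj} (u : X.Ver A B) :
    HEq (F.cmap (X.runit u)) (Y.runit (F.vmap u)) := by
  have := (hF.1 B).symm
  have := hF.laxid_heq_cid B
  have hunit : HEq (Y.cvcomp (Y.cid (F.vmap u)) (F.laxid B))
      (Y.cid (Y.vcomp (F.vmap u) (F.vmap (X.vid B)))) := by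
    rw [← Y.cid_vcomp]
    congr! 1
  refine HEq.trans ?_ (F.lax_runit u)
  exact ((Y.cid_chcomp' _ rfl rfl HEq.rfl (by congr!) HEq.rfl hunit).trans
    (Y.cid_chcomp' _ rfl rfl HEq.rfl (heq_of_eq (hF.2.1 u _)).symm HEq.rfl
      (hF.laxcomp_heq_cid _ _))).symm

theorem cmap_vassoc {A B C D : X.Obj} (u : X.Ver A B) (v : X.Ver B C) (w : X.Ver C D) :
    HEq (F.cmap (X.vassoc u v w)) (Y.vassoc (F.vmap u) (F.vmap v) (F.vmap w)) := by
  set z := Y.vcomp (Y.vcomp (F.vmap u) (F.vmap v)) (F.vmap w)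
  have huv := hF.2.1 u v
  have hz : F.vmap (X.vcomp (X.vcomp u v) w) = z := by rw [hF.2.1 _ w, huv]
  have : Y.vcomp (F.vmap (X.vcomp u v)) (F.vmap w) = z := by rw [huv]
  have hl₁ : HEq (Y.cvcomp (F.laxcomp u v) (Y.cid (F.vmap w))) (Y.cid z) := by
    have := hF.2.2.2 u v
    rw [← Y.cid_vcomp]
    congr! 1
  have hl₂ : HEq (F.laxcomp (X.vcomp u v) w) (Y.cid z) :=
    (hF.2.2.2 _ w).trans (by rw [huv])
  have hleft : HEq (Y.chcomp (Y.cvcomp (F.laxcomp u v) (Y.cid (F.vmap w)))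
      (F.laxcomp (X.vcomp u v) w)) (Y.cid z) :=
    (show HEq _ (Y.chcomp (Y.cid z) (Y.cid z)) by congr! 1).trans (Y.cid_chcomp _)
  have := (hF.2.1 v w).symm
  have := hF.laxcomp_heq_cid v w
  have hright : HEq (Y.cvcomp (Y.cid (F.vmap u)) (F.laxcomp v w))
      (Y.cid (Y.vcomp (F.vmap u) (F.vmap (X.vcomp v w)))) := by
    rw [← Y.cid_vcomp]
    congr! 1
  refine HEq.trans ?_ ((Y.chcomp_cid' _ rfl rfl (heq_of_eq (Y.hid_comp _)) (heq_of_eq hz)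
    (heq_of_eq (Y.hid_comp _)) hleft).symm.trans (F.lax_assoc u v w)).symm
  exact ((Y.cid_chcomp' _ rfl rfl HEq.rfl (by congr!) HEq.rfl hright).trans
    (Y.cid_chcomp' _ rfl rfl HEq.rfl (heq_of_eq (hF.2.1 u _)).symm HEq.rfl
      (hF.laxcomp_heq_cid _ _))).symm

theorem cmap_vassocInv {A B C D : X.Obj} (u : X.Ver A B) (v : X.Ver B C) (w : X.Ver C D) :
    HEq (F.cmap (X.vassocInv u v w)) (Y.vassocInv (F.vmap u) (F.vmap v) (F.vmap w)) :=
  F.cmap_heq_of_left_inv (X.vassocInv_vassoc u v w) (by rw [hF.2.1, hF.2.1])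
    (by rw [hF.2.1, hF.2.1]) (hF.cmap_vassoc u v w) (Y.vassoc_vassocInv _ _ _)

theorem cmap_lunitInv {A B : X.Obj} (u : X.Ver A B) :
    HEq (F.cmap (X.lunitInv u)) (Y.lunitInv (F.vmap u)) :=
  F.cmap_heq_of_left_inv (X.lunitInv_lunit u) (by rw [hF.2.1, hF.1]) HEq.rfl
    (hF.cmap_lunit u) (Y.lunit_lunitInv _)

theorem cmap_runitInv {A B : X.Obj} (u : X.Ver A B) :
    HEq (F.cmap (X.runitInv u)) (Y.runitInv (F.vmap u)) :=
  F.cmap_heq_of_left_inv (X.runitInv_runit u) (by rw [hF.2.1, hF.1]) HEq.rfl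
    (hF.cmap_runit u) (Y.runit_runitInv _)

end LaxDblFunctor.IsStrict

section Pullback

variable {DA DB DC : WeakDoubleCat.{u}} (F : LaxDblFunctor DA DC) (G : LaxDblFunctor DB DC)

theorem pbHor_ext {X Y : (pbData F G).Obj} {f g : (pbData F G).Hor X Y}
    (h₁ : f.val.1 = g.val.1) (h₂ : f.val.2 = g.val.2) : f = g :=
  Subtype.ext (Prod.ext h₁ h₂)

theorem pbVer_ext {X Y : (pbData F G).Obj} {u v : (pbData F G).Ver X Y}
    (h₁ : u.val.1 = v.val.1) (h₂ : u.val.2 = v.val.2) : u = v :=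
  Subtype.ext (Prod.ext h₁ h₂)

theorem pbCell_ext {X Y X' Y' : (pbData F G).Obj}
    {f : (pbData F G).Hor X Y} {u : (pbData F G).Ver X X'} {v : (pbData F G).Ver Y Y'}
    {g : (pbData F G).Hor X' Y'} {α β : (pbData F G).Cell f u v g}
    (h₁ : α.val.1 = β.val.1) (h₂ : α.val.2 = β.val.2) : α = β :=
  Subtype.ext (Prod.ext h₁ h₂)

theorem pbCell_heq {X Y X' Y' : (pbData F G).Obj}
    {f f' : (pbData F G).Hor X Y} {u : (pbData F G).Ver X X'} {v : (pbData F G).Ver Y Y'}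
    {g g' : (pbData F G).Hor X' Y'}
    {α : (pbData F G).Cell f u v g} {β : (pbData F G).Cell f' u v g'}
    (h₁ : HEq α.val.1 β.val.1) (h₂ : HEq α.val.2 β.val.2)
    (hf : f = f' := by apply pbHor_ext <;> simp [pbHcomp, pbHid, WeakDoubleCat.hid_comp,
      WeakDoubleCat.hcomp_id, WeakDoubleCat.hassoc, LaxDblFunctor.hmap_id, ColaxDblFunctor.hmap_id,
      LaxDblFunctor.hmap_comp, ColaxDblFunctor.hmap_comp])
    (hg : g = g' := by apply pbHor_ext <;> simp [pbHcomp, pbHid, WeakDoubleCat.hid_comp,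
      WeakDoubleCat.hcomp_id, WeakDoubleCat.hassoc, LaxDblFunctor.hmap_id, ColaxDblFunctor.hmap_id,
      LaxDblFunctor.hmap_comp, ColaxDblFunctor.hmap_comp]) :
    HEq α β := by
  subst hf hg
  exact heq_of_eq (pbCell_ext F G (eq_of_heq h₁) (eq_of_heq h₂))

def pbHid (X : (pbData F G).Obj) : (pbData F G).Hor X X :=
  ⟨(DA.hid X.val.1, DB.hid X.val.2), by rw [F.hmap_id, G.hmap_id, X.prop]⟩

def pbHcomp {X Y Z : (pbData F G).Obj} (f : (pbData F G).Hor X Y)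
    (g : (pbData F G).Hor Y Z) : (pbData F G).Hor X Z :=
  ⟨(DA.hcomp f.val.1 g.val.1, DB.hcomp f.val.2 g.val.2), by
    -- with the compatibility proofs of the components in context, `congr!` closes the goal
    have := X.prop; have := Y.prop; have := Z.prop; have := f.prop; have := g.prop
    rw [F.hmap_comp, G.hmap_comp]
    congr! 1⟩

theorem pbHid_comp {X Y : (pbData F G).Obj} (f : (pbData F G).Hor X Y) :
    pbHcomp F G (pbHid F G X) f = f :=
  pbHor_ext F G (DA.hid_comp _) (DB.hid_comp _)

theorem pbHcomp_id {X Y : (pbData F G).Obj} (f : (pbData F G).Hor X Y) :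
    pbHcomp F G f (pbHid F G Y) = f :=
  pbHor_ext F G (DA.hcomp_id _) (DB.hcomp_id _)

theorem pbHassoc {X Y Z W : (pbData F G).Obj} (f : (pbData F G).Hor X Y)
    (g : (pbData F G).Hor Y Z) (h : (pbData F G).Hor Z W) :
    pbHcomp F G (pbHcomp F G f g) h = pbHcomp F G f (pbHcomp F G g h) :=
  pbHor_ext F G (DA.hassoc _ _ _) (DB.hassoc _ _ _)

def pbCid {X Y : (pbData F G).Obj} (u : (pbData F G).Ver X Y) :
    (pbData F G).Cell (pbHid F G X) u u (pbHid F G Y) :=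
  ⟨(DA.cid u.val.1, DB.cid u.val.2), by
    have := X.prop; have := Y.prop; have := u.prop
    exact (F.cmap_cid _).trans <| HEq.trans (by congr! 1) (G.cmap_cid _).symm⟩

def pbChcomp {X Y Z X' Y' Z' : (pbData F G).Obj}
    {f : (pbData F G).Hor X Y} {g : (pbData F G).Hor Y Z}
    {u : (pbData F G).Ver X X'} {v : (pbData F G).Ver Y Y'} {w : (pbData F G).Ver Z Z'}
    {f' : (pbData F G).Hor X' Y'} {g' : (pbData F G).Hor Y' Z'}
    (α : (pbData F G).Cell f u v f') (β : (pbData F G).Cell g v w g') :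
    (pbData F G).Cell (pbHcomp F G f g) u w (pbHcomp F G f' g') :=
  ⟨(DA.chcomp α.val.1 β.val.1, DB.chcomp α.val.2 β.val.2), by
    have := X.prop; have := Y.prop; have := Z.prop
    have := X'.prop; have := Y'.prop; have := Z'.prop
    have := f.prop; have := g.prop; have := f'.prop; have := g'.prop
    have := u.prop; have := v.prop; have := w.prop; have := α.prop; have := β.prop
    exact (F.cmap_chcomp _ _).trans <| HEq.trans (by congr! 1) (G.cmap_chcomp _ _).symm⟩

variable {F G} (hF : F.IsStrict) (hG : G.IsStrict)

def pbVid (X : (pbData F G).Obj) : (pbData F G).Ver X X :=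
  ⟨(DA.vid X.val.1, DB.vid X.val.2), by rw [hF.1, hG.1, X.prop]⟩

def pbVcomp {X Y Z : (pbData F G).Obj} (u : (pbData F G).Ver X Y)
    (v : (pbData F G).Ver Y Z) : (pbData F G).Ver X Z :=
  ⟨(DA.vcomp u.val.1 v.val.1, DB.vcomp u.val.2 v.val.2), by
    have := X.prop; have := Y.prop; have := Z.prop; have := u.prop; have := v.prop
    rw [hF.2.1, hG.2.1]
    congr! 1⟩

def pbIdcell {X Y : (pbData F G).Obj} (f : (pbData F G).Hor X Y) :
    (pbData F G).Cell f (pbVid hF hG X) (pbVid hF hG Y) f :=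
  ⟨(DA.idcell f.val.1, DB.idcell f.val.2), by
    have := X.prop; have := Y.prop; have := f.prop
    exact (hF.cmap_idcell _).trans <| HEq.trans (by congr! 1) (hG.cmap_idcell _).symm⟩

def pbCvcomp {X Y X' Y' X'' Y'' : (pbData F G).Obj}
    {f : (pbData F G).Hor X Y} {u : (pbData F G).Ver X X'} {v : (pbData F G).Ver Y Y'}
    {g : (pbData F G).Hor X' Y'} {u' : (pbData F G).Ver X' X''}
    {v' : (pbData F G).Ver Y' Y''} {h : (pbData F G).Hor X'' Y''}
    (α : (pbData F G).Cell f u v g) (β : (pbData F G).Cell g u' v' h) :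
    (pbData F G).Cell f (pbVcomp hF hG u u') (pbVcomp hF hG v v') h :=
  ⟨(DA.cvcomp α.val.1 β.val.1, DB.cvcomp α.val.2 β.val.2), by
    have := X.prop; have := Y.prop; have := X'.prop; have := Y'.prop
    have := X''.prop; have := Y''.prop
    have := f.prop; have := g.prop; have := h.prop
    have := u.prop; have := v.prop; have := u'.prop; have := v'.prop
    have := α.prop; have := β.prop
    exact (hF.cmap_cvcomp _ _).trans <| HEq.trans (by congr! 1) (hG.cmap_cvcomp _ _).symm⟩

def pbVassoc {X Y Z W : (pbData F G).Obj} (u : (pbData F G).Ver X Y)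
    (v : (pbData F G).Ver Y Z) (w : (pbData F G).Ver Z W) :
    (pbData F G).Cell (pbHid F G X) (pbVcomp hF hG u (pbVcomp hF hG v w))
      (pbVcomp hF hG (pbVcomp hF hG u v) w) (pbHid F G W) :=
  ⟨(DA.vassoc u.val.1 v.val.1 w.val.1, DB.vassoc u.val.2 v.val.2 w.val.2), by
    have := X.prop; have := Y.prop; have := Z.prop; have := W.prop
    have := u.prop; have := v.prop; have := w.prop
    exact (hF.cmap_vassoc _ _ _).trans <| HEq.trans (by congr! 1) (hG.cmap_vassoc _ _ _).symm⟩

def pbVassocInv {X Y Z W : (pbData F G).Obj} (u : (pbData F G).Ver X Y)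
    (v : (pbData F G).Ver Y Z) (w : (pbData F G).Ver Z W) :
    (pbData F G).Cell (pbHid F G X) (pbVcomp hF hG (pbVcomp hF hG u v) w)
      (pbVcomp hF hG u (pbVcomp hF hG v w)) (pbHid F G W) :=
  ⟨(DA.vassocInv u.val.1 v.val.1 w.val.1, DB.vassocInv u.val.2 v.val.2 w.val.2), by
    have := X.prop; have := Y.prop; have := Z.prop; have := W.prop
    have := u.prop; have := v.prop; have := w.prop
    exact (hF.cmap_vassocInv _ _ _).trans <|
      HEq.trans (by congr! 1) (hG.cmap_vassocInv _ _ _).symm⟩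

def pbLunit {X Y : (pbData F G).Obj} (u : (pbData F G).Ver X Y) :
    (pbData F G).Cell (pbHid F G X) (pbVcomp hF hG (pbVid hF hG X) u) u (pbHid F G Y) :=
  ⟨(DA.lunit u.val.1, DB.lunit u.val.2), by
    have := X.prop; have := Y.prop; have := u.prop
    exact (hF.cmap_lunit _).trans <| HEq.trans (by congr! 1) (hG.cmap_lunit _).symm⟩

def pbLunitInv {X Y : (pbData F G).Obj} (u : (pbData F G).Ver X Y) :
    (pbData F G).Cell (pbHid F G X) u (pbVcomp hF hG (pbVid hF hG X) u) (pbHid F G Y) :=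
  ⟨(DA.lunitInv u.val.1, DB.lunitInv u.val.2), by
    have := X.prop; have := Y.prop; have := u.prop
    exact (hF.cmap_lunitInv _).trans <| HEq.trans (by congr! 1) (hG.cmap_lunitInv _).symm⟩

def pbRunit {X Y : (pbData F G).Obj} (u : (pbData F G).Ver X Y) :
    (pbData F G).Cell (pbHid F G X) (pbVcomp hF hG u (pbVid hF hG Y)) u (pbHid F G Y) :=
  ⟨(DA.runit u.val.1, DB.runit u.val.2), by
    have := X.prop; have := Y.prop; have := u.prop
    exact (hF.cmap_runit _).trans <| HEq.trans (by congr! 1) (hG.cmap_runit _).symm⟩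

def pbRunitInv {X Y : (pbData F G).Obj} (u : (pbData F G).Ver X Y) :
    (pbData F G).Cell (pbHid F G X) u (pbVcomp hF hG u (pbVid hF hG Y)) (pbHid F G Y) :=
  ⟨(DA.runitInv u.val.1, DB.runitInv u.val.2), by
    have := X.prop; have := Y.prop; have := u.prop
    exact (hF.cmap_runitInv _).trans <| HEq.trans (by congr! 1) (hG.cmap_runitInv _).symm⟩

abbrev pbCat : WeakDoubleCat.{u} where
  toDblData := pbData F G
  hid := pbHid F G
  hcomp := pbHcomp F G
  hid_comp := pbHid_comp F G
  hcomp_id := pbHcomp_id F G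
  hassoc := pbHassoc F G
  cid := pbCid F G
  chcomp := pbChcomp F G
  cid_chcomp _ := pbCell_heq F G (DA.cid_chcomp _) (DB.cid_chcomp _)
  chcomp_cid _ := pbCell_heq F G (DA.chcomp_cid _) (DB.chcomp_cid _)
  chcomp_assoc _ _ _ := pbCell_heq F G (DA.chcomp_assoc _ _ _) (DB.chcomp_assoc _ _ _)
  vid := pbVid hF hG
  vcomp := pbVcomp hF hG
  idcell := pbIdcell hF hG
  cvcomp := pbCvcomp hF hG
  idcell_hid _ := pbCell_ext F G (DA.idcell_hid _) (DB.idcell_hid _)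
  idcell_hcomp _ _ := pbCell_ext F G (DA.idcell_hcomp _ _) (DB.idcell_hcomp _ _)
  cid_vcomp _ _ := pbCell_ext F G (DA.cid_vcomp _ _) (DB.cid_vcomp _ _)
  interchange _ _ _ _ := pbCell_ext F G (DA.interchange _ _ _ _) (DB.interchange _ _ _ _)
  vassoc := pbVassoc hF hG
  vassocInv := pbVassocInv hF hG
  vassoc_vassocInv _ _ _ :=
    pbCell_heq F G (DA.vassoc_vassocInv _ _ _) (DB.vassoc_vassocInv _ _ _)
  vassocInv_vassoc _ _ _ :=
    pbCell_heq F G (DA.vassocInv_vassoc _ _ _) (DB.vassocInv_vassoc _ _ _)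
  lunit := pbLunit hF hG
  lunitInv := pbLunitInv hF hG
  lunit_lunitInv _ := pbCell_heq F G (DA.lunit_lunitInv _) (DB.lunit_lunitInv _)
  lunitInv_lunit _ := pbCell_heq F G (DA.lunitInv_lunit _) (DB.lunitInv_lunit _)
  runit := pbRunit hF hG
  runitInv := pbRunitInv hF hG
  runit_runitInv _ := pbCell_heq F G (DA.runit_runitInv _) (DB.runit_runitInv _)
  runitInv_runit _ := pbCell_heq F G (DA.runitInv_runit _) (DB.runitInv_runit _)
  vassoc_nat _ _ _ := pbCell_heq F G (DA.vassoc_nat _ _ _) (DB.vassoc_nat _ _ _)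
  lunit_nat _ := pbCell_heq F G (DA.lunit_nat _) (DB.lunit_nat _)
  runit_nat _ := pbCell_heq F G (DA.runit_nat _) (DB.runit_nat _)
  pentagon _ _ _ _ := pbCell_heq F G (DA.pentagon _ _ _ _) (DB.pentagon _ _ _ _)
  triangle _ _ := pbCell_heq F G (DA.triangle _ _) (DB.triangle _ _)

def pbFst : LaxDblFunctor (pbCat hF hG) DA where
  obj X := X.val.1
  hmap f := f.val.1
  vmap u := u.val.1
  cmap α := α.val.1
  hmap_id _ := rfl
  hmap_comp _ _ := rfl
  cmap_cid _ := HEq.rfl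
  cmap_chcomp _ _ := HEq.rfl
  laxid X := DA.cid (DA.vid X.val.1)
  laxcomp u v := DA.cid (DA.vcomp u.val.1 v.val.1)
  laxid_nat _ := (DA.cid_chcomp _).trans (DA.chcomp_cid _).symm
  laxcomp_nat _ _ := (DA.cid_chcomp _).trans (DA.chcomp_cid _).symm
  lax_lunit u := DA.lax_lunit_cid u.val.1
  lax_runit u := DA.lax_runit_cid u.val.1
  lax_assoc u v w := DA.lax_assoc_cid u.val.1 v.val.1 w.val.1

def pbSnd : LaxDblFunctor (pbCat hF hG) DB where
  obj X := X.val.2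
  hmap f := f.val.2
  vmap u := u.val.2
  cmap α := α.val.2
  hmap_id _ := rfl
  hmap_comp _ _ := rfl
  cmap_cid _ := HEq.rfl
  cmap_chcomp _ _ := HEq.rfl
  laxid X := DB.cid (DB.vid X.val.2)
  laxcomp u v := DB.cid (DB.vcomp u.val.2 v.val.2)
  laxid_nat _ := (DB.cid_chcomp _).trans (DB.chcomp_cid _).symm
  laxcomp_nat _ _ := (DB.cid_chcomp _).trans (DB.chcomp_cid _).symm
  lax_lunit u := DB.lax_lunit_cid u.val.2
  lax_runit u := DB.lax_runit_cid u.val.2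
  lax_assoc u v w := DB.lax_assoc_cid u.val.2 v.val.2 w.val.2

theorem pbFst_isStrict : (pbFst hF hG).IsStrict :=
  ⟨fun _ => rfl, fun _ _ => rfl, fun _ => HEq.rfl, fun _ _ => HEq.rfl⟩

theorem pbSnd_isStrict : (pbSnd hF hG).IsStrict :=
  ⟨fun _ => rfl, fun _ _ => rfl, fun _ => HEq.rfl, fun _ _ => HEq.rfl⟩

end Pullback

theorem LaxDblFunctor.IsStrict.ext {X Y : WeakDoubleCat.{u}} {p p' : LaxDblFunctor X Y}
    (hp : p.IsStrict) (hp' : p'.IsStrict) (hobj : p.obj = p'.obj)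
    (hhmap : HEq @p.hmap @p'.hmap) (hvmap : HEq @p.vmap @p'.vmap)
    (hcmap : HEq @p.cmap @p'.cmap) : p = p' := by
  obtain ⟨obj, hmap, vmap, cmap, _, _, _, _, laxid, laxcomp, _, _, _, _, _⟩ := p
  obtain ⟨obj', hmap', vmap', cmap', _, _, _, _, laxid', laxcomp', _, _, _, _, _⟩ := p'
  obtain rfl := hobj
  obtain rfl := eq_of_heq hhmap
  obtain rfl := eq_of_heq hvmap
  obtain rfl := eq_of_heq hcmap
  obtain rfl : laxid = laxid' :=
    funext fun A => eq_of_heq ((hp.2.2.1 A).trans (hp'.2.2.1 A).symm)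
  obtain rfl : @laxcomp = @laxcomp' := by
    funext _ _ _ u v; exact eq_of_heq ((hp.2.2.2 u v).trans (hp'.2.2.2 u v).symm)
  rfl

namespace IsSetPullback

variable {DA DB DC : WeakDoubleCat.{u}} {F : LaxDblFunctor DA DC} {G : LaxDblFunctor DB DC}
  (hF : F.IsStrict) (hG : G.IsStrict)

set_option maxHeartbeats 1000000 in
theorem eq_pbCat {P : WeakDoubleCat.{u}} {hcar : P.toDblData = pbData F G}
    {p : LaxDblFunctor P DA} {q : LaxDblFunctor P DB} (h : IsSetPullback F G P hcar p q) :
    P = pbCat hF hG := by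
  obtain ⟨hp, hq, hpobj, hqobj, hphmap, hqhmap, hpvmap, hqvmap, hpcmap, hqcmap⟩ := h
  obtain ⟨data, hid, hcomp, _, _, _, cid, chcomp, _, _, _, vid, vcomp, idcell, cvcomp,
    _, _, _, _, vassoc, vassocInv, _, _, lunit, lunitInv, _, _, runit, runitInv,
    _, _, _, _, _, _, _⟩ := P
  cases hcar
  obtain ⟨pobj, phmap, pvmap, pcmap, phmap_id, phmap_comp, pcmap_cid, pcmap_chcomp, _⟩ := p
  obtain ⟨qobj, qhmap, qvmap, qcmap, qhmap_id, qhmap_comp, qcmap_cid, qcmap_chcomp, _⟩ := q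
  obtain rfl := funext hpobj; obtain rfl := funext hqobj
  obtain rfl := eq_of_heq hphmap; obtain rfl := eq_of_heq hqhmap
  obtain rfl := eq_of_heq hpvmap; obtain rfl := eq_of_heq hqvmap
  obtain rfl := eq_of_heq hpcmap; obtain rfl := eq_of_heq hqcmap
  obtain rfl : hid = pbHid F G := funext fun X => pbHor_ext F G (phmap_id X) (qhmap_id X)
  obtain rfl : @hcomp = @pbHcomp _ _ _ F G := by
    funext; exact pbHor_ext F G (phmap_comp _ _) (qhmap_comp _ _)
  obtain rfl : vid = pbVid hF hG := funext fun X => pbVer_ext F G (hp.1 X) (hq.1 X)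
  obtain rfl : @vcomp = @pbVcomp _ _ _ F G hF hG := by
    funext; exact pbVer_ext F G (hp.2.1 _ _) (hq.2.1 _ _)
  obtain rfl : @cid = @pbCid _ _ _ F G := by
    funext; exact pbCell_ext F G (eq_of_heq (pcmap_cid _)) (eq_of_heq (qcmap_cid _))
  obtain rfl : @chcomp = @pbChcomp _ _ _ F G := by
    funext; exact pbCell_ext F G (eq_of_heq (pcmap_chcomp _ _)) (eq_of_heq (qcmap_chcomp _ _))
  obtain rfl : @idcell = @pbIdcell _ _ _ F G hF hG := by
    funext; exact pbCell_ext F G (eq_of_heq (hp.cmap_idcell _)) (eq_of_heq (hq.cmap_idcell _))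
  obtain rfl : @cvcomp = @pbCvcomp _ _ _ F G hF hG := by
    funext; exact pbCell_ext F G (eq_of_heq (hp.cmap_cvcomp _ _)) (eq_of_heq (hq.cmap_cvcomp _ _))
  obtain rfl : @vassoc = @pbVassoc _ _ _ F G hF hG := by
    funext; exact pbCell_ext F G (eq_of_heq (hp.cmap_vassoc _ _ _))
      (eq_of_heq (hq.cmap_vassoc _ _ _))
  obtain rfl : @vassocInv = @pbVassocInv _ _ _ F G hF hG := by
    funext; exact pbCell_ext F G (eq_of_heq (hp.cmap_vassocInv _ _ _))
      (eq_of_heq (hq.cmap_vassocInv _ _ _))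
  obtain rfl : @lunit = @pbLunit _ _ _ F G hF hG := by
    funext; exact pbCell_ext F G (eq_of_heq (hp.cmap_lunit _)) (eq_of_heq (hq.cmap_lunit _))
  obtain rfl : @lunitInv = @pbLunitInv _ _ _ F G hF hG := by
    funext; exact pbCell_ext F G (eq_of_heq (hp.cmap_lunitInv _)) (eq_of_heq (hq.cmap_lunitInv _))
  obtain rfl : @runit = @pbRunit _ _ _ F G hF hG := by
    funext; exact pbCell_ext F G (eq_of_heq (hp.cmap_runit _)) (eq_of_heq (hq.cmap_runit _))
  obtain rfl : @runitInv = @pbRunitInv _ _ _ F G hF hG := by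
    funext; exact pbCell_ext F G (eq_of_heq (hp.cmap_runitInv _)) (eq_of_heq (hq.cmap_runitInv _))
  rfl

theorem fst_eq {hcar : (pbCat hF hG).toDblData = pbData F G}
    {p : LaxDblFunctor (pbCat hF hG) DA} {q : LaxDblFunctor (pbCat hF hG) DB}
    (h : IsSetPullback F G (pbCat hF hG) hcar p q) : p = pbFst hF hG :=
  h.1.ext (pbFst_isStrict hF hG) (funext h.2.2.1) h.2.2.2.2.1 h.2.2.2.2.2.2.1
    h.2.2.2.2.2.2.2.2.1

theorem snd_eq {hcar : (pbCat hF hG).toDblData = pbData F G}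
    {p : LaxDblFunctor (pbCat hF hG) DA} {q : LaxDblFunctor (pbCat hF hG) DB}
    (h : IsSetPullback F G (pbCat hF hG) hcar p q) : q = pbSnd hF hG :=
  h.2.1.ext (pbSnd_isStrict hF hG) (funext h.2.2.2.1) h.2.2.2.2.2.1 h.2.2.2.2.2.2.2.1
    h.2.2.2.2.2.2.2.2.2

end IsSetPullback

namespace DblCellGP.IsStrict

variable {XA XB XC XD : WeakDoubleCat.{u}}
  {F : LaxDblFunctor XA XB} {G : LaxDblFunctor XC XD}
  {U : ColaxDblFunctor XA XC} {V : ColaxDblFunctor XB XD}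
  {σ : DblCellGP F G U V} (hσ : σ.IsStrict)
include hσ

theorem app_heq_hid (A : XA.Obj) : HEq (σ.app A) (XD.hid (G.obj (U.obj A))) := by
  have ⟨_, _, hobj, _, _, _, happ, _⟩ := hσ
  have := hobj A
  exact (happ A).trans (by congr!)

theorem cellapp_heq_cid {A B : XA.Obj} (u : XA.Ver A B) :
    HEq (σ.cellapp u) (XD.cid (G.vmap (U.vmap u))) := by
  have ⟨_, _, hobj, _, hvmap, _, _, hcellapp⟩ := hσ
  have := hobj A; have := hobj B; have := hvmap u
  exact (hcellapp u).trans (by congr!)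

theorem hcomp_app_hid (A : XA.Obj) :
    HEq (XD.hcomp (σ.app A) (XD.hid (G.obj (U.obj A)))) (XD.hid (V.obj (F.obj A))) := by
  have hA := hσ.2.2.1 A
  have := hσ.app_heq_hid A
  exact (show HEq _ (XD.hcomp (XD.hid (G.obj (U.obj A))) (XD.hid _)) by congr! 1).trans
    (by rw [XD.hid_comp, hA])

theorem cmap_colaxid (A : XA.Obj) : HEq (G.cmap (U.colaxid A)) (V.colaxid (F.obj A)) := by
  -- every factor of `σ.unit_compat A` other than the two comparison cells is an identity
  have ⟨hF, hG, hobj, _, hvmap, _⟩ := hσ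
  have hA := hobj A
  have hFid := (hF.1 A).symm
  have := hF.laxid_heq_cid A
  have hlaxid : HEq (V.cmap (F.laxid A)) (XD.cid (V.vmap (F.vmap (XA.vid A)))) :=
    (show HEq _ (V.cmap (XB.cid (F.vmap (XA.vid A)))) by congr! 1).trans (V.cmap_cid _)
  have hleft := (XD.cid_chcomp' _ rfl rfl (heq_of_eq (V.hmap_id _)) (by rw [hFid])
    (heq_of_eq (V.hmap_id _)) hlaxid).trans
    (XD.cid_chcomp' (G.cmap (U.colaxid A)) hA hA (hσ.app_heq_hid A) (hvmap _)
      (hσ.app_heq_hid A) (hσ.cellapp_heq_cid _))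
  have hGid : HEq (G.vmap (XC.vid (U.obj A))) (XD.vid (V.obj (F.obj A))) := by
    rw [hG.1, hA]
  have hunit : HEq (XD.chcomp (XD.idcell (σ.app A)) (G.laxid (U.obj A)))
      (XD.cid (XD.vid (V.obj (F.obj A)))) := by
    have := hσ.app_heq_hid A
    have := hG.2.2.1 (U.obj A)
    have := hG.1 (U.obj A)
    have : HEq (XD.vid (V.obj (F.obj A))) (XD.vid (G.obj (U.obj A))) := by rw [hA]
    have hidcell : HEq (XD.idcell (σ.app A)) (XD.cid (XD.vid (G.obj (U.obj A)))) :=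
      (show HEq _ (XD.idcell (XD.hid (G.obj (U.obj A)))) by congr! 1).trans
        (heq_of_eq (XD.idcell_hid _))
    refine (show HEq _ (XD.chcomp (XD.cid (XD.vid (G.obj (U.obj A))))
      (XD.cid (XD.vid (G.obj (U.obj A))))) by congr! 1).trans ((XD.cid_chcomp _).trans ?_)
    rw [hA]
  have hright := XD.chcomp_cid' (V.colaxid (F.obj A)) hA.symm hA.symm (hσ.hcomp_app_hid A)
    hGid (hσ.hcomp_app_hid A) hunit
  exact hleft.symm.trans ((σ.unit_compat A).trans hright)

theorem cmap_colaxcomp {A B C : XA.Obj} (u : XA.Ver A B) (v : XA.Ver B C) :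
    HEq (G.cmap (U.colaxcomp u v)) (V.colaxcomp (F.vmap u) (F.vmap v)) := by
  have ⟨hF, hG, hobj, _, hvmap, _⟩ := hσ
  have hA := hobj A
  have hB := hobj B
  have hC := hobj C
  have hFcomp := (hF.2.1 u v).symm
  have := hF.laxcomp_heq_cid u v
  have hlaxcomp : HEq (V.cmap (F.laxcomp u v)) (XD.cid (V.vmap (F.vmap (XA.vcomp u v)))) :=
    (show HEq _ (V.cmap (XB.cid (F.vmap (XA.vcomp u v)))) by congr! 1).trans (V.cmap_cid _)
  have hleft := (XD.cid_chcomp' _ rfl rfl (heq_of_eq (V.hmap_id _)) (by rw [hFcomp])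
    (heq_of_eq (V.hmap_id _)) hlaxcomp).trans
    (XD.cid_chcomp' (G.cmap (U.colaxcomp u v)) hA hC (hσ.app_heq_hid A) (hvmap _)
      (hσ.app_heq_hid C) (hσ.cellapp_heq_cid _))
  set y := XD.vcomp (G.vmap (U.vmap u)) (G.vmap (U.vmap v))
  have hy : HEq y (XD.vcomp (V.vmap (F.vmap u)) (V.vmap (F.vmap v))) := by
    have := (hvmap u).symm; have := (hvmap v).symm
    have := hA.symm; have := hB.symm; have := hC.symm
    congr! 1
  have hunit : HEq (XD.chcomp (XD.cvcomp (σ.cellapp u) (σ.cellapp v))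
      (G.laxcomp (U.vmap u) (U.vmap v))) (XD.cid y) := by
    have := hσ.app_heq_hid A; have := hσ.app_heq_hid B; have := hσ.app_heq_hid C
    have := hvmap u; have := hvmap v; have := hy.symm
    have := hG.2.2.2 (U.vmap u) (U.vmap v)
    have := hG.2.1 (U.vmap u) (U.vmap v)
    have : HEq (XD.cvcomp (σ.cellapp u) (σ.cellapp v)) (XD.cid y) := by
      have := hσ.cellapp_heq_cid u; have := hσ.cellapp_heq_cid v
      exact (show HEq _ (XD.cvcomp (XD.cid (G.vmap (U.vmap u))) (XD.cid (G.vmap (U.vmap v))))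
        by congr! 1).trans (heq_of_eq (XD.cid_vcomp _ _))
    exact (show HEq _ (XD.chcomp (XD.cid y) (XD.cid y)) by congr! 1).trans (XD.cid_chcomp _)
  have hz : HEq (XD.cid y) (XD.cid (XD.vcomp (V.vmap (F.vmap u)) (V.vmap (F.vmap v)))) := by
    have := hA.symm; have := hC.symm
    congr! 1
  have hright := XD.chcomp_cid' (V.colaxcomp (F.vmap u) (F.vmap v)) hA.symm hC.symm
    (hσ.hcomp_app_hid A) ((heq_of_eq (hG.2.1 _ _)).trans hy) (hσ.hcomp_app_hid C)
    (hunit.trans hz)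
  exact hleft.symm.trans ((σ.comp_compat u v).trans hright)

end DblCellGP.IsStrict

theorem LaxCompSpec.cmap_laxid_heq {XE XA XB : WeakDoubleCat.{u}} {R₁ : LaxDblFunctor XE XA}
    {F : LaxDblFunctor XA XB} {R : LaxDblFunctor XE XB} (h : LaxCompSpec R₁ F R)
    (hF : F.IsStrict) (A : XE.Obj) : HEq (F.cmap (R₁.laxid A)) (R.laxid A) :=
  ((h.2.2.2.2.1 A).trans (XB.cid_chcomp' _ rfl rfl HEq.rfl (heq_of_eq (hF.1 _)).symm HEq.rfl
    (hF.laxid_heq_cid _))).symm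

theorem LaxCompSpec.cmap_laxcomp_heq {XE XA XB : WeakDoubleCat.{u}} {R₁ : LaxDblFunctor XE XA}
    {F : LaxDblFunctor XA XB} {R : LaxDblFunctor XE XB} (h : LaxCompSpec R₁ F R)
    (hF : F.IsStrict) {A B C : XE.Obj} (u : XE.Ver A B) (v : XE.Ver B C) :
    HEq (F.cmap (R₁.laxcomp u v)) (R.laxcomp u v) :=
  ((h.2.2.2.2.2 u v).trans (XB.cid_chcomp' _ rfl rfl HEq.rfl (heq_of_eq (hF.2.1 _ _)).symm
    HEq.rfl (hF.laxcomp_heq_cid _ _))).symm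

namespace HCompCellSpec

variable {XA XB XC XD XB' XD' : WeakDoubleCat.{u}}
  {F : LaxDblFunctor XA XB} {G : LaxDblFunctor XC XD}
  {U : ColaxDblFunctor XA XC} {V : ColaxDblFunctor XB XD}
  {F' : LaxDblFunctor XB XB'} {G' : LaxDblFunctor XD XD'} {W : ColaxDblFunctor XB' XD'}
  {F₂ : LaxDblFunctor XA XB'} {G₂ : LaxDblFunctor XC XD'}
  {π : DblCellGP F G U V} {π' : DblCellGP F' G' V W}
  {hF₂ : LaxCompSpec F F' F₂} {hG₂ : LaxCompSpec G G' G₂} {ρ : DblCellGP F₂ G₂ U W}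

theorem app_heq_of_isStrict (h : HCompCellSpec π π' hF₂ hG₂ ρ) (hπ' : π'.IsStrict)
    (A : XA.Obj) : HEq (ρ.app A) (G'.hmap (π.app A)) := by
  have := hπ'.2.2.1 (F.obj A)
  have := hπ'.app_heq_hid (F.obj A)
  exact (h.1 A).trans <| (show HEq _ (XD'.hcomp (XD'.hid _) (G'.hmap (π.app A))) by congr! 1).trans
    (heq_of_eq (XD'.hid_comp _))

theorem cellapp_heq_of_isStrict (h : HCompCellSpec π π' hF₂ hG₂ ρ) (hπ' : π'.IsStrict)
    {A B : XA.Obj} (u : XA.Ver A B) : HEq (ρ.cellapp u) (G'.cmap (π.cellapp u)) :=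
  (h.2 u).trans (XD'.cid_chcomp' _ (hπ'.2.2.1 _) (hπ'.2.2.1 _) (hπ'.app_heq_hid _)
    (hπ'.2.2.2.2.1 _) (hπ'.app_heq_hid _) (hπ'.cellapp_heq_cid _))

end HCompCellSpec

namespace ColaxDblFunctor

variable {X Y : WeakDoubleCat.{u}} (U : ColaxDblFunctor X Y)

theorem unit_compat_cid (A : X.Obj) :
    HEq (Y.chcomp (U.cmap (X.cid (X.vid A))) (Y.chcomp (Y.cid (U.vmap (X.vid A))) (U.colaxid A)))
      (Y.chcomp (U.colaxid A)
        (Y.chcomp (Y.idcell (Y.hid (U.obj A))) (Y.cid (Y.vid (U.obj A))))) := by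
  have hunit : HEq (Y.chcomp (Y.idcell (Y.hid (U.obj A))) (Y.cid (Y.vid (U.obj A))))
      (Y.cid (Y.vid (U.obj A))) := by
    rw [Y.idcell_hid]; exact Y.cid_chcomp _
  exact ((Y.cid_chcomp' _ rfl rfl (heq_of_eq (U.hmap_id _)) HEq.rfl (heq_of_eq (U.hmap_id _))
    (U.cmap_cid _)).trans (Y.cid_chcomp _)).trans
    (Y.chcomp_cid' _ rfl rfl (heq_of_eq (Y.hid_comp _)) HEq.rfl (heq_of_eq (Y.hid_comp _))
      hunit).symm

theorem comp_compat_cid {A B C : X.Obj} (u : X.Ver A B) (v : X.Ver B C) :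
    HEq (Y.chcomp (U.cmap (X.cid (X.vcomp u v)))
        (Y.chcomp (Y.cid (U.vmap (X.vcomp u v))) (U.colaxcomp u v)))
      (Y.chcomp (U.colaxcomp u v) (Y.chcomp (Y.cvcomp (Y.cid (U.vmap u)) (Y.cid (U.vmap v)))
        (Y.cid (Y.vcomp (U.vmap u) (U.vmap v))))) := by
  have hcomp : HEq (Y.chcomp (Y.cvcomp (Y.cid (U.vmap u)) (Y.cid (U.vmap v)))
      (Y.cid (Y.vcomp (U.vmap u) (U.vmap v)))) (Y.cid (Y.vcomp (U.vmap u) (U.vmap v))) := by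
    rw [Y.cid_vcomp]; exact Y.cid_chcomp _
  exact ((Y.cid_chcomp' _ rfl rfl (heq_of_eq (U.hmap_id _)) HEq.rfl (heq_of_eq (U.hmap_id _))
    (U.cmap_cid _)).trans (Y.cid_chcomp _)).trans
    (Y.chcomp_cid' _ rfl rfl (heq_of_eq (Y.hid_comp _)) HEq.rfl (heq_of_eq (Y.hid_comp _))
      hcomp).symm

end ColaxDblFunctor

section InducedMap

variable {XA XB XC XD XA' XC' : WeakDoubleCat.{u}}
  {F : LaxDblFunctor XA XB} {G : LaxDblFunctor XC XD}
  {U : ColaxDblFunctor XA XC} {V : ColaxDblFunctor XB XD}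
  {F' : LaxDblFunctor XA' XB} {G' : LaxDblFunctor XC' XD} {U' : ColaxDblFunctor XA' XC'}
  {σ : DblCellGP F G U V} {σ' : DblCellGP F' G' U' V}
  (hσ : σ.IsStrict) (hσ' : σ'.IsStrict)

def pbMap : ColaxDblFunctor (pbCat hσ.1 hσ'.1) (pbCat hσ.2.1 hσ'.2.1) where
  obj X := ⟨(U.obj X.val.1, U'.obj X.val.2), by rw [← hσ.2.2.1, ← hσ'.2.2.1, X.prop]⟩
  hmap {X Y} f := ⟨(U.hmap f.val.1, U'.hmap f.val.2), by
    have := X.prop; have := Y.prop; have := f.prop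
    exact (hσ.2.2.2.1 _).symm.trans <| HEq.trans (by congr! 1) (hσ'.2.2.2.1 _)⟩
  vmap {X Y} u := ⟨(U.vmap u.val.1, U'.vmap u.val.2), by
    have := X.prop; have := Y.prop; have := u.prop
    exact (hσ.2.2.2.2.1 _).symm.trans <| HEq.trans (by congr! 1) (hσ'.2.2.2.2.1 _)⟩
  cmap {X Y X' Y' f u v g} α := ⟨(U.cmap α.val.1, U'.cmap α.val.2), by
    have := X.prop; have := Y.prop; have := X'.prop; have := Y'.prop
    have := f.prop; have := u.prop; have := v.prop; have := g.prop; have := α.prop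
    exact (hσ.2.2.2.2.2.1 _).symm.trans <| HEq.trans (by congr! 1) (hσ'.2.2.2.2.2.1 _)⟩
  hmap_id _ := pbHor_ext G G' (U.hmap_id _) (U'.hmap_id _)
  hmap_comp _ _ := pbHor_ext G G' (U.hmap_comp _ _) (U'.hmap_comp _ _)
  cmap_cid _ := pbCell_heq G G' (U.cmap_cid _) (U'.cmap_cid _)
  cmap_chcomp _ _ := pbCell_heq G G' (U.cmap_chcomp _ _) (U'.cmap_chcomp _ _)
  colaxid X := ⟨(U.colaxid X.val.1, U'.colaxid X.val.2), by
    have := X.prop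
    exact (hσ.cmap_colaxid _).trans <| HEq.trans (by congr! 1) (hσ'.cmap_colaxid _).symm⟩
  colaxcomp {X Y Z} u v := ⟨(U.colaxcomp u.val.1 v.val.1, U'.colaxcomp u.val.2 v.val.2), by
    have := X.prop; have := Y.prop; have := Z.prop; have := u.prop; have := v.prop
    exact (hσ.cmap_colaxcomp _ _).trans <|
      HEq.trans (by congr! 1) (hσ'.cmap_colaxcomp _ _).symm⟩
  colaxid_nat _ := pbCell_heq G G' (U.colaxid_nat _) (U'.colaxid_nat _)
  colaxcomp_nat _ _ := pbCell_heq G G' (U.colaxcomp_nat _ _) (U'.colaxcomp_nat _ _)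
  colax_lunit _ := pbCell_heq G G' (U.colax_lunit _) (U'.colax_lunit _)
  colax_runit _ := pbCell_heq G G' (U.colax_runit _) (U'.colax_runit _)
  colax_assoc _ _ _ := pbCell_heq G G' (U.colax_assoc _ _ _) (U'.colax_assoc _ _ _)

def pbMapFst : DblCellGP (pbFst hσ.1 hσ'.1) (pbFst hσ.2.1 hσ'.2.1) (pbMap hσ hσ') U where
  app A := XC.hid (U.obj A.val.1)
  cellapp u := XC.cid (U.vmap u.val.1)
  hnat _ := (XC.hcomp_id _).trans (XC.hid_comp _).symm
  cellnat _ := (XC.chcomp_cid _).trans (XC.cid_chcomp _).symm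
  unit_compat A := U.unit_compat_cid A.val.1
  comp_compat u v := U.comp_compat_cid u.val.1 v.val.1

def pbMapSnd : DblCellGP (pbSnd hσ.1 hσ'.1) (pbSnd hσ.2.1 hσ'.2.1) (pbMap hσ hσ') U' where
  app A := XC'.hid (U'.obj A.val.2)
  cellapp u := XC'.cid (U'.vmap u.val.2)
  hnat _ := (XC'.hcomp_id _).trans (XC'.hid_comp _).symm
  cellnat _ := (XC'.chcomp_cid _).trans (XC'.cid_chcomp _).symm
  unit_compat A := U'.unit_compat_cid A.val.2
  comp_compat u v := U'.comp_compat_cid u.val.2 v.val.2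

theorem pbMapFst_isStrict : (pbMapFst hσ hσ').IsStrict :=
  ⟨pbFst_isStrict _ _, pbFst_isStrict _ _, fun _ => rfl, fun _ => HEq.rfl,
    fun _ => HEq.rfl, fun _ => HEq.rfl, fun _ => HEq.rfl, fun _ => HEq.rfl⟩

theorem pbMapSnd_isStrict : (pbMapSnd hσ hσ').IsStrict :=
  ⟨pbSnd_isStrict _ _, pbSnd_isStrict _ _, fun _ => rfl, fun _ => HEq.rfl,
    fun _ => HEq.rfl, fun _ => HEq.rfl, fun _ => HEq.rfl, fun _ => HEq.rfl⟩

theorem pbMap_unique {T : ColaxDblFunctor (pbCat hσ.1 hσ'.1) (pbCat hσ.2.1 hσ'.2.1)}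
    {ρ₁ : DblCellGP (pbFst hσ.1 hσ'.1) (pbFst hσ.2.1 hσ'.2.1) T U}
    {ρ₂ : DblCellGP (pbSnd hσ.1 hσ'.1) (pbSnd hσ.2.1 hσ'.2.1) T U'}
    (hρ₁ : ρ₁.IsStrict) (hρ₂ : ρ₂.IsStrict) : T = pbMap hσ hσ' := by
  obtain ⟨obj, hmap, vmap, cmap, _, _, _, _, colaxid, colaxcomp, _, _, _, _, _⟩ := T
  obtain rfl : obj = (pbMap hσ hσ').obj :=
    funext fun X => Subtype.ext (Prod.ext (hρ₁.2.2.1 X).symm (hρ₂.2.2.1 X).symm)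
  obtain rfl : @hmap = @ColaxDblFunctor.hmap _ _ (pbMap hσ hσ') := by
    funext X Y f
    exact pbHor_ext G G' (eq_of_heq (hρ₁.2.2.2.1 f)).symm (eq_of_heq (hρ₂.2.2.2.1 f)).symm
  obtain rfl : @vmap = @ColaxDblFunctor.vmap _ _ (pbMap hσ hσ') := by
    funext X Y u
    exact pbVer_ext G G' (eq_of_heq (hρ₁.2.2.2.2.1 u)).symm (eq_of_heq (hρ₂.2.2.2.2.1 u)).symm
  obtain rfl : @cmap = @ColaxDblFunctor.cmap _ _ (pbMap hσ hσ') := by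
    funext _ _ _ _ _ _ _ _ α
    exact pbCell_ext G G' (eq_of_heq (hρ₁.2.2.2.2.2.1 α)).symm
      (eq_of_heq (hρ₂.2.2.2.2.2.1 α)).symm
  obtain rfl : @colaxid = @ColaxDblFunctor.colaxid _ _ (pbMap hσ hσ') := by
    funext A
    exact pbCell_ext G G' (eq_of_heq (hρ₁.cmap_colaxid A)) (eq_of_heq (hρ₂.cmap_colaxid A))
  obtain rfl : @colaxcomp = @ColaxDblFunctor.colaxcomp _ _ (pbMap hσ hσ') := by
    funext X Y Z u v
    exact pbCell_ext G G' (eq_of_heq (hρ₁.cmap_colaxcomp u v))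
      (eq_of_heq (hρ₂.cmap_colaxcomp u v))
  rfl

end InducedMap

section Lift

variable {XE XA XA' XB : WeakDoubleCat.{u}} {F : LaxDblFunctor XA XB}
  {F' : LaxDblFunctor XA' XB} (hF : F.IsStrict) (hF' : F'.IsStrict)
  {R₁ : LaxDblFunctor XE XA} {R₂ : LaxDblFunctor XE XA'} {R : LaxDblFunctor XE XB}
  (h₁ : LaxCompSpec R₁ F R) (h₂ : LaxCompSpec R₂ F' R)

def pbLift : LaxDblFunctor XE (pbCat hF hF') where
  obj e := ⟨(R₁.obj e, R₂.obj e), (h₁.1 e).symm.trans (h₂.1 e)⟩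
  hmap f := ⟨(R₁.hmap f, R₂.hmap f), (h₁.2.1 f).symm.trans (h₂.2.1 f)⟩
  vmap u := ⟨(R₁.vmap u, R₂.vmap u), (h₁.2.2.1 u).symm.trans (h₂.2.2.1 u)⟩
  cmap α := ⟨(R₁.cmap α, R₂.cmap α), (h₁.2.2.2.1 α).symm.trans (h₂.2.2.2.1 α)⟩
  hmap_id A := pbHor_ext F F' (R₁.hmap_id A) (R₂.hmap_id A)
  hmap_comp f g := pbHor_ext F F' (R₁.hmap_comp f g) (R₂.hmap_comp f g)
  cmap_cid u := pbCell_heq F F' (R₁.cmap_cid u) (R₂.cmap_cid u)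
  cmap_chcomp α β := pbCell_heq F F' (R₁.cmap_chcomp α β) (R₂.cmap_chcomp α β)
  laxid A := ⟨(R₁.laxid A, R₂.laxid A),
    (h₁.cmap_laxid_heq hF A).trans (h₂.cmap_laxid_heq hF' A).symm⟩
  laxcomp u v := ⟨(R₁.laxcomp u v, R₂.laxcomp u v),
    (h₁.cmap_laxcomp_heq hF u v).trans (h₂.cmap_laxcomp_heq hF' u v).symm⟩
  laxid_nat f := pbCell_heq F F' (R₁.laxid_nat f) (R₂.laxid_nat f)
  laxcomp_nat α β := pbCell_heq F F' (R₁.laxcomp_nat α β) (R₂.laxcomp_nat α β)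
  lax_lunit u := pbCell_heq F F' (R₁.lax_lunit u) (R₂.lax_lunit u)
  lax_runit u := pbCell_heq F F' (R₁.lax_runit u) (R₂.lax_runit u)
  lax_assoc u v w := pbCell_heq F F' (R₁.lax_assoc u v w) (R₂.lax_assoc u v w)

theorem pbLift_comp_fst : LaxCompSpec (pbLift hF hF' h₁ h₂) (pbFst hF hF') R₁ :=
  ⟨fun _ => rfl, fun _ => HEq.rfl, fun _ => HEq.rfl, fun _ => HEq.rfl,
    fun _ => (XA.cid_chcomp _).symm, fun _ _ => (XA.cid_chcomp _).symm⟩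

theorem pbLift_comp_snd : LaxCompSpec (pbLift hF hF' h₁ h₂) (pbSnd hF hF') R₂ :=
  ⟨fun _ => rfl, fun _ => HEq.rfl, fun _ => HEq.rfl, fun _ => HEq.rfl,
    fun _ => (XA'.cid_chcomp _).symm, fun _ _ => (XA'.cid_chcomp _).symm⟩

theorem pbLift_unique {R₀ : LaxDblFunctor XE (pbCat hF hF')}
    (m₁ : LaxCompSpec R₀ (pbFst hF hF') R₁) (m₂ : LaxCompSpec R₀ (pbSnd hF hF') R₂) :
    R₀ = pbLift hF hF' h₁ h₂ := by
  obtain ⟨obj, hmap, vmap, cmap, _, _, _, _, laxid, laxcomp, _, _, _, _, _⟩ := R₀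
  obtain rfl : obj = (pbLift hF hF' h₁ h₂).obj :=
    funext fun A => Subtype.ext (Prod.ext (m₁.1 A).symm (m₂.1 A).symm)
  obtain rfl : @hmap = @LaxDblFunctor.hmap _ _ (pbLift hF hF' h₁ h₂) := by
    funext X Y f
    exact pbHor_ext F F' (eq_of_heq (m₁.2.1 f)).symm (eq_of_heq (m₂.2.1 f)).symm
  obtain rfl : @vmap = @LaxDblFunctor.vmap _ _ (pbLift hF hF' h₁ h₂) := by
    funext X Y u
    exact pbVer_ext F F' (eq_of_heq (m₁.2.2.1 u)).symm (eq_of_heq (m₂.2.2.1 u)).symm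
  obtain rfl : @cmap = @LaxDblFunctor.cmap _ _ (pbLift hF hF' h₁ h₂) := by
    funext _ _ _ _ _ _ _ _ α
    exact pbCell_ext F F' (eq_of_heq (m₁.2.2.2.1 α)).symm (eq_of_heq (m₂.2.2.2.1 α)).symm
  obtain rfl : @laxid = @LaxDblFunctor.laxid _ _ (pbLift hF hF' h₁ h₂) := by
    funext A
    exact pbCell_ext F F' (eq_of_heq ((XA.cid_chcomp _).symm.trans (m₁.2.2.2.2.1 A).symm))
      (eq_of_heq ((XA'.cid_chcomp _).symm.trans (m₂.2.2.2.2.1 A).symm))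
  obtain rfl : @laxcomp = @LaxDblFunctor.laxcomp _ _ (pbLift hF hF' h₁ h₂) := by
    funext X Y Z u v
    exact pbCell_ext F F' (eq_of_heq ((XA.cid_chcomp _).symm.trans (m₁.2.2.2.2.2 u v).symm))
      (eq_of_heq ((XA'.cid_chcomp _).symm.trans (m₂.2.2.2.2.2 u v).symm))
  rfl

end Lift

section LiftCell

variable {XA XB XC XD XA' XC' XE XF : WeakDoubleCat.{u}}
  {F : LaxDblFunctor XA XB} {G : LaxDblFunctor XC XD}
  {U : ColaxDblFunctor XA XC} {V : ColaxDblFunctor XB XD}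
  {F' : LaxDblFunctor XA' XB} {G' : LaxDblFunctor XC' XD} {U' : ColaxDblFunctor XA' XC'}
  {σ : DblCellGP F G U V} {σ' : DblCellGP F' G' U' V}
  (hσ : σ.IsStrict) (hσ' : σ'.IsStrict) {Tw : ColaxDblFunctor XE XF}
  {R₁ : LaxDblFunctor XE XA} {S₁ : LaxDblFunctor XF XC} {ρ₁ : DblCellGP R₁ S₁ Tw U}
  {R₂ : LaxDblFunctor XE XA'} {S₂ : LaxDblFunctor XF XC'} {ρ₂ : DblCellGP R₂ S₂ Tw U'}
  {R : LaxDblFunctor XE XB} {S : LaxDblFunctor XF XD}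
  {h₁ : LaxCompSpec R₁ F R} {h₂ : LaxCompSpec R₂ F' R}
  {k₁ : LaxCompSpec S₁ G S} {k₂ : LaxCompSpec S₂ G' S} {c : DblCellGP R S Tw V}
  (hs₁ : HCompCellSpec ρ₁ σ h₁ k₁ c) (hs₂ : HCompCellSpec ρ₂ σ' h₂ k₂ c)

attribute [local simp] pbMap pbLift in
def pbLiftCell : DblCellGP (pbLift hσ.1 hσ'.1 h₁ h₂) (pbLift hσ.2.1 hσ'.2.1 k₁ k₂) Tw
    (pbMap hσ hσ') where
  app A := ⟨(ρ₁.app A, ρ₂.app A),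
    (hs₁.app_heq_of_isStrict hσ A).symm.trans (hs₂.app_heq_of_isStrict hσ' A)⟩
  cellapp u := ⟨(ρ₁.cellapp u, ρ₂.cellapp u),
    (hs₁.cellapp_heq_of_isStrict hσ u).symm.trans (hs₂.cellapp_heq_of_isStrict hσ' u)⟩
  hnat f := pbHor_ext G G' (ρ₁.hnat f) (ρ₂.hnat f)
  cellnat α := pbCell_heq G G' (ρ₁.cellnat α) (ρ₂.cellnat α)
    (pbHor_ext G G' (ρ₁.hnat _) (ρ₂.hnat _)) (pbHor_ext G G' (ρ₁.hnat _) (ρ₂.hnat _))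
  unit_compat A := pbCell_heq G G' (ρ₁.unit_compat A) (ρ₂.unit_compat A)
  comp_compat u v := pbCell_heq G G' (ρ₁.comp_compat u v) (ρ₂.comp_compat u v)

theorem pbLiftCell_hcomp_fst : HCompCellSpec (pbLiftCell hσ hσ' hs₁ hs₂) (pbMapFst hσ hσ')
    (pbLift_comp_fst _ _ h₁ h₂) (pbLift_comp_fst _ _ k₁ k₂) ρ₁ :=
  ⟨fun _ => (heq_of_eq (XC.hid_comp _)).symm, fun _ => (XC.cid_chcomp _).symm⟩

theorem pbLiftCell_hcomp_snd : HCompCellSpec (pbLiftCell hσ hσ' hs₁ hs₂) (pbMapSnd hσ hσ')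
    (pbLift_comp_snd _ _ h₁ h₂) (pbLift_comp_snd _ _ k₁ k₂) ρ₂ :=
  ⟨fun _ => (heq_of_eq (XC'.hid_comp _)).symm, fun _ => (XC'.cid_chcomp _).symm⟩

theorem pbLiftCell_unique
    {c' : DblCellGP (pbLift hσ.1 hσ'.1 h₁ h₂) (pbLift hσ.2.1 hσ'.2.1 k₁ k₂) Tw
      (pbMap hσ hσ')}
    {m₁ n₁ m₂ n₂} (hc₁ : HCompCellSpec c' (pbMapFst hσ hσ') m₁ n₁ ρ₁)
    (hc₂ : HCompCellSpec c' (pbMapSnd hσ hσ') m₂ n₂ ρ₂) :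
    c' = pbLiftCell hσ hσ' hs₁ hs₂ := by
  obtain ⟨app, cellapp, _, _, _, _⟩ := c'
  obtain rfl : app = (pbLiftCell hσ hσ' hs₁ hs₂).app :=
    funext fun A => pbHor_ext G G'
      (eq_of_heq ((hc₁.1 A).trans (heq_of_eq (XC.hid_comp _)))).symm
      (eq_of_heq ((hc₂.1 A).trans (heq_of_eq (XC'.hid_comp _)))).symm
  obtain rfl : @cellapp = @DblCellGP.cellapp _ _ _ _ _ _ _ _ (pbLiftCell hσ hσ' hs₁ hs₂) := by
    funext X Y u
    exact pbCell_ext G G' (eq_of_heq ((hc₁.2 u).trans (XC.cid_chcomp _))).symm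
      (eq_of_heq ((hc₂.2 u).trans (XC'.cid_chcomp _))).symm
  rfl

include hs₁ hs₂ in
theorem pbLiftCell_existsUnique :
    ∃! ξ : Σ' (R₀ : LaxDblFunctor XE (pbCat hσ.1 hσ'.1))
        (S₀ : LaxDblFunctor XF (pbCat hσ.2.1 hσ'.2.1)), DblCellGP R₀ S₀ Tw (pbMap hσ hσ'),
      (∃ (m₁ : LaxCompSpec ξ.1 (pbFst hσ.1 hσ'.1) R₁)
          (n₁ : LaxCompSpec ξ.2.1 (pbFst hσ.2.1 hσ'.2.1) S₁),
        HCompCellSpec ξ.2.2 (pbMapFst hσ hσ') m₁ n₁ ρ₁) ∧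
      (∃ (m₂ : LaxCompSpec ξ.1 (pbSnd hσ.1 hσ'.1) R₂)
          (n₂ : LaxCompSpec ξ.2.1 (pbSnd hσ.2.1 hσ'.2.1) S₂),
        HCompCellSpec ξ.2.2 (pbMapSnd hσ hσ') m₂ n₂ ρ₂) := by
  refine ⟨⟨_, _, pbLiftCell hσ hσ' hs₁ hs₂⟩,
    ⟨⟨_, _, pbLiftCell_hcomp_fst hσ hσ' hs₁ hs₂⟩,
      ⟨_, _, pbLiftCell_hcomp_snd hσ hσ' hs₁ hs₂⟩⟩, ?_⟩
  rintro ⟨R₀, S₀, c'⟩ ⟨⟨m₁, n₁, hc₁⟩, ⟨m₂, n₂, hc₂⟩⟩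
  obtain rfl := pbLift_unique _ _ h₁ h₂ m₁ m₂
  obtain rfl := pbLift_unique _ _ k₁ k₂ n₁ n₂
  obtain rfl := pbLiftCell_unique hσ hσ' hs₁ hs₂ hc₁ hc₂
  rfl

end LiftCell

/-- Let `σ : VF ⇒ GU` and `σ' : VF' ⇒ G'U'` be strict
cells in `Dbl` with common right vertical arrow `V`.  Then there exist a
unique colax functor `U ×_V U'` between the set-theoretical pullbacks,
together with strict cells `π₁`, `π₂` over the pullback projections (given
set-theoretically by `(A, A') ↦ (U A, U' A')`), and the resulting square is a
pullback in the category `Dbl₁` of colax functors and arbitrary cells. -/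
theorem pullback_of_strict_cells
    (XA XB XC XD XA' XC' : WeakDoubleCat.{u})
    (F : LaxDblFunctor XA XB) (G : LaxDblFunctor XC XD)
    (U : ColaxDblFunctor XA XC) (V : ColaxDblFunctor XB XD)
    (F' : LaxDblFunctor XA' XB) (G' : LaxDblFunctor XC' XD)
    (U' : ColaxDblFunctor XA' XC')
    (σ : DblCellGP F G U V) (σ' : DblCellGP F' G' U' V)
    (hσ : σ.IsStrict) (hσ' : σ'.IsStrict)
    -- the set-theoretical pullbacks of `F, F'` and of `G, G'`
    (PA : WeakDoubleCat.{u}) (hPA : PA.toDblData = pbData F F')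
    (prA1 : LaxDblFunctor PA XA) (prA2 : LaxDblFunctor PA XA')
    (hprA : IsSetPullback F F' PA hPA prA1 prA2)
    (PC : WeakDoubleCat.{u}) (hPC : PC.toDblData = pbData G G')
    (prC1 : LaxDblFunctor PC XC) (prC2 : LaxDblFunctor PC XC')
    (hprC : IsSetPullback G G' PC hPC prC1 prC2) :
    ∃ (T : ColaxDblFunctor PA PC)
      (π₁ : DblCellGP prA1 prC1 T U) (π₂ : DblCellGP prA2 prC2 T U'),
      -- `T = U ×_V U'` is given set-theoretically by `(A, A') ↦ (U A, U' A')`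
      (∀ x : PA.Obj,
        (cast (congrArg DblData.Obj hPC) (T.obj x)).val =
          (U.obj (cast (congrArg DblData.Obj hPA) x).val.1,
           U'.obj (cast (congrArg DblData.Obj hPA) x).val.2)) ∧
      -- `π₁` and `π₂` are strict cells
      π₁.IsStrict ∧ π₂.IsStrict ∧
      -- uniqueness of `T` (together with such strict cells)
      (∀ (T' : ColaxDblFunctor PA PC),
        (∃ (ρ₁ : DblCellGP prA1 prC1 T' U) (ρ₂ : DblCellGP prA2 prC2 T' U'),
          ρ₁.IsStrict ∧ ρ₂.IsStrict) → T' = T) ∧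
      -- the square is a pullback in `Dbl₁` (colax functors as objects,
      -- arbitrary cells of `Dbl` as morphisms, composed horizontally)
      (∀ (XE XF : WeakDoubleCat.{u}) (Tw : ColaxDblFunctor XE XF)
        (R₁ : LaxDblFunctor XE XA) (S₁ : LaxDblFunctor XF XC)
        (ρ₁ : DblCellGP R₁ S₁ Tw U)
        (R₂ : LaxDblFunctor XE XA') (S₂ : LaxDblFunctor XF XC')
        (ρ₂ : DblCellGP R₂ S₂ Tw U'),
        (∃ (R : LaxDblFunctor XE XB) (S : LaxDblFunctor XF XD)
           (h₁ : LaxCompSpec R₁ F R) (h₂ : LaxCompSpec R₂ F' R)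
           (k₁ : LaxCompSpec S₁ G S) (k₂ : LaxCompSpec S₂ G' S)
           (c₁ c₂ : DblCellGP R S Tw V),
           HCompCellSpec ρ₁ σ h₁ k₁ c₁ ∧ HCompCellSpec ρ₂ σ' h₂ k₂ c₂ ∧ c₁ = c₂) →
        ∃! ξ : Σ' (R₀ : LaxDblFunctor XE PA) (S₀ : LaxDblFunctor XF PC),
            DblCellGP R₀ S₀ Tw T,
          (∃ (m₁ : LaxCompSpec ξ.1 prA1 R₁) (n₁ : LaxCompSpec ξ.2.1 prC1 S₁),
            HCompCellSpec ξ.2.2 π₁ m₁ n₁ ρ₁) ∧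
          (∃ (m₂ : LaxCompSpec ξ.1 prA2 R₂) (n₂ : LaxCompSpec ξ.2.1 prC2 S₂),
            HCompCellSpec ξ.2.2 π₂ m₂ n₂ ρ₂)) := by
  obtain rfl := hprA.eq_pbCat hσ.1 hσ'.1
  obtain rfl := hprA.fst_eq hσ.1 hσ'.1
  obtain rfl := hprA.snd_eq hσ.1 hσ'.1
  obtain rfl := hprC.eq_pbCat hσ.2.1 hσ'.2.1
  obtain rfl := hprC.fst_eq hσ.2.1 hσ'.2.1
  obtain rfl := hprC.snd_eq hσ.2.1 hσ'.2.1
  refine ⟨pbMap hσ hσ', pbMapFst hσ hσ', pbMapSnd hσ hσ', fun _ => rfl,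
    pbMapFst_isStrict hσ hσ', pbMapSnd_isStrict hσ hσ',
    fun _ ⟨_, _, hρ₁, hρ₂⟩ => pbMap_unique hσ hσ' hρ₁ hρ₂, ?_⟩
  rintro XE XF Tw R₁ S₁ ρ₁ R₂ S₂ ρ₂ ⟨R, S, h₁, h₂, k₁, k₂, c, _, hs₁, hs₂, rfl⟩
  exact pbLiftCell_existsUnique hσ hσ' hs₁ hs₂
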